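/- arXiv:2512.22922 — 7 statements merged into one kernel-verified Lean document; each statement's English description precedes it below -/
import Mathlib

section
/- Consider the closed-loop multi-agent system under the adaptive protocol. If every adaptive gain ρ_i is bounded on [0,∞) (i.e., for each i there exists M_i with ρ_i(t) ≤ M_i for all t ≥ 0), then ζ_i(t) → 0 as t → ∞ for every i = 1,…,N. (Lemma 3.) -/
/-!
Let `V i = ζᵢᵀ P ζᵢ`. Along the closed loop, `ζᵢ' = A ζᵢ + B wᵢ` with `wᵢ = ∑ⱼ aᵢⱼ (uᵢ - uⱼ)`, and
the Riccati equation turns `V i'` into `‖Bᵀ P ζᵢ‖² - ‖ζᵢ‖² + 2 ⟪Bᵀ P ζᵢ, wᵢ⟫`. Since every gain is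
nondecreasing and bounded, it is bounded in absolute value, so `‖wᵢ‖²` is at most a constant times
`∑ⱼ ‖Bᵀ P ζⱼ‖² = ∑ⱼ ρⱼ'`, whose integral is finite. Hence `V i` is bounded and `‖ζᵢ‖²` is
integrable on `[0, ∞)`. Then `ζᵢ` and `ζᵢ'` are bounded, so `‖ζᵢ‖²` has a bounded derivative,
and Barbalat's lemma gives `‖ζᵢ‖² → 0`.
-/

open Matrix Filter Set Topology MeasureTheory

section DotProduct

variable {ι κ : Type*} [Fintype ι] [Fintype κ]

lemma dotProduct_self_nonneg (v : ι → ℝ) : 0 ≤ v ⬝ᵥ v := by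
  simpa using dotProduct_self_star_nonneg v

lemma two_mul_dotProduct_le (v w : ι → ℝ) : 2 * (v ⬝ᵥ w) ≤ v ⬝ᵥ v + w ⬝ᵥ w := by
  have := dotProduct_self_nonneg (v - w)
  simp only [sub_dotProduct, dotProduct_sub, dotProduct_comm w v] at this
  linarith

lemma abs_two_mul_dotProduct_le (v w : ι → ℝ) : |2 * (v ⬝ᵥ w)| ≤ v ⬝ᵥ v + w ⬝ᵥ w := by
  have := two_mul_dotProduct_le v (-w)
  simp only [dotProduct_neg, neg_dotProduct, neg_neg] at this
  exact abs_le.2 ⟨by linarith, two_mul_dotProduct_le v w⟩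

lemma dotProduct_self_add_le (v w : ι → ℝ) :
    (v + w) ⬝ᵥ (v + w) ≤ 2 * (v ⬝ᵥ v) + 2 * (w ⬝ᵥ w) := by
  have := two_mul_dotProduct_le v w
  simp only [add_dotProduct, dotProduct_add, dotProduct_comm w v]
  linarith

lemma dotProduct_self_sub_le (v w : ι → ℝ) :
    (v - w) ⬝ᵥ (v - w) ≤ 2 * (v ⬝ᵥ v) + 2 * (w ⬝ᵥ w) := by
  simpa [sub_eq_add_neg] using dotProduct_self_add_le v (-w)

lemma dotProduct_self_sum_le (v : κ → ι → ℝ) :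
    (∑ k, v k) ⬝ᵥ (∑ k, v k) ≤ Fintype.card κ * ∑ k, v k ⬝ᵥ v k := by
  simp only [dotProduct, Finset.sum_apply, ← sq]
  rw [Finset.sum_comm, Finset.mul_sum]
  exact Finset.sum_le_sum fun i _ => sq_sum_le_card_mul_sum_sq

lemma dotProduct_self_sum_smul_sub_le (c : κ → ℝ) (u : κ → ι → ℝ) (i : κ) :
    (∑ j, c j • (u i - u j)) ⬝ᵥ (∑ j, c j • (u i - u j)) ≤
      4 * Fintype.card κ * (∑ j, c j ^ 2) * ∑ j, u j ⬝ᵥ u j := by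
  set S := ∑ j, u j ⬝ᵥ u j
  have hS (j : κ) : u j ⬝ᵥ u j ≤ S :=
    Finset.single_le_sum (fun k _ => dotProduct_self_nonneg (u k)) (Finset.mem_univ j)
  calc _ ≤ Fintype.card κ * ∑ j, (c j • (u i - u j)) ⬝ᵥ (c j • (u i - u j)) :=
        dotProduct_self_sum_le _
    _ ≤ Fintype.card κ * ∑ j, c j ^ 2 * (4 * S) := by
        gcongr with j
        rw [smul_dotProduct, dotProduct_smul, smul_eq_mul, smul_eq_mul, ← mul_assoc, ← sq]
        gcongr
        linarith [dotProduct_self_sub_le (u i) (u j), hS i, hS j]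
    _ = _ := by rw [← Finset.sum_mul]; ring

end DotProduct

namespace Matrix

lemma PosDef.transpose_eq {ι : Type*} {P : Matrix ι ι ℝ} (hP : P.PosDef) : Pᵀ = P := by
  simpa using hP.isHermitian.eq

variable {ι κ : Type*} [Fintype ι] [Fintype κ]

lemma dotProduct_self_mulVec_le (M : Matrix κ ι ℝ) (v : ι → ℝ) :
    (M *ᵥ v) ⬝ᵥ (M *ᵥ v) ≤ (∑ i, ∑ j, M i j ^ 2) * (v ⬝ᵥ v) := by
  simp only [dotProduct, mulVec, ← sq]
  rw [Finset.sum_mul]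
  exact Finset.sum_le_sum fun i _ => Finset.sum_mul_sq_le_sq_mul_sq _ _ _

lemma dotProduct_transpose_mul_self_mulVec (M : Matrix κ ι ℝ) (v : ι → ℝ) :
    v ⬝ᵥ ((Mᵀ * M) *ᵥ v) = (M *ᵥ v) ⬝ᵥ (M *ᵥ v) := by
  rw [← mulVec_mulVec, dotProduct_mulVec, vecMul_transpose]

open scoped MatrixOrder in
lemma PosDef.exists_dotProduct_self_le [DecidableEq ι] {P : Matrix ι ι ℝ} (hP : P.PosDef) :
    ∃ c, 0 ≤ c ∧ ∀ v, v ⬝ᵥ v ≤ c * (v ⬝ᵥ (P *ᵥ v)) := by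
  set S := CFC.sqrt P
  have hSS : S * S = P := CFC.sqrt_mul_sqrt_self P hP.posSemidef.nonneg
  have hSt : Sᵀ = S := by
    simpa using (nonneg_iff_posSemidef.1 (CFC.sqrt_nonneg P)).isHermitian.eq
  have hSdet : IsUnit S.det := by
    refine isUnit_iff_ne_zero.2 fun h => hP.det_pos.ne' ?_
    rw [← hSS, det_mul, h, zero_mul]
  refine ⟨∑ i, ∑ j, S⁻¹ i j ^ 2, by positivity, fun v => ?_⟩
  calc v ⬝ᵥ v = (S⁻¹ *ᵥ (S *ᵥ v)) ⬝ᵥ (S⁻¹ *ᵥ (S *ᵥ v)) := by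
        rw [mulVec_mulVec, nonsing_inv_mul _ hSdet, one_mulVec]
    _ ≤ _ * ((S *ᵥ v) ⬝ᵥ (S *ᵥ v)) := dotProduct_self_mulVec_le _ _
    _ = _ := by rw [← dotProduct_transpose_mul_self_mulVec, hSt, hSS]

end Matrix

section Calculus

variable {ι : Type*} [Fintype ι]

lemma HasDerivAt.dotProduct {f g : ℝ → ι → ℝ} {f' g' : ι → ℝ} {t : ℝ}
    (hf : HasDerivAt f f' t) (hg : HasDerivAt g g' t) :
    HasDerivAt (fun s => f s ⬝ᵥ g s) (f' ⬝ᵥ g t + f t ⬝ᵥ g') t := by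
  have hk (k : ι) : HasDerivAt (fun s => f s k * g s k) (f' k * g t k + f t k * g' k) t :=
    (hasDerivAt_pi.1 hf k).mul (hasDerivAt_pi.1 hg k)
  have := HasDerivAt.fun_sum (u := Finset.univ) fun k _ => hk k
  rw [Finset.sum_add_distrib] at this
  exact this

lemma HasDerivAt.dotProduct_self {f : ℝ → ι → ℝ} {f' : ι → ℝ} {t : ℝ}
    (hf : HasDerivAt f f' t) : HasDerivAt (fun s => f s ⬝ᵥ f s) (2 * (f t ⬝ᵥ f')) t := by
  convert hf.dotProduct hf using 1
  rw [dotProduct_comm]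
  ring

lemma HasDerivAt.mulVec {κ : Type*} (M : Matrix κ ι ℝ) {f : ℝ → ι → ℝ} {f' : ι → ℝ} {t : ℝ}
    (hf : HasDerivAt f f' t) : HasDerivAt (fun s => M *ᵥ f s) (M *ᵥ f') t := by
  refine hasDerivAt_pi.2 fun k => ?_
  have := (hasDerivAt_const t (M k)).dotProduct hf
  rw [zero_dotProduct, zero_add] at this
  exact this

lemma tendsto_zero_of_dotProduct_self_tendsto_zero {F : Filter ℝ} {f : ℝ → ι → ℝ}
    (hf : Tendsto (fun t => f t ⬝ᵥ f t) F (𝓝 0)) : Tendsto f F (𝓝 0) := by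
  refine tendsto_pi_nhds.2 fun k => squeeze_zero_norm (fun t => ?_) (by simpa using hf.sqrt)
  refine Real.abs_le_sqrt ?_
  simpa [dotProduct, sq] using Finset.single_le_sum (f := fun l => f t l * f t l)
    (fun l _ => mul_self_nonneg _) (Finset.mem_univ k)

end Calculus

lemma monotoneOn_Ici_of_hasDerivAt_nonneg {f f' : ℝ → ℝ} {a : ℝ}
    (hf : ∀ t, a ≤ t → HasDerivAt f (f' t) t) (hf' : ∀ t, a ≤ t → 0 ≤ f' t) :
    MonotoneOn f (Ici a) := by
  refine monotoneOn_of_hasDerivWithinAt_nonneg (f' := f') (convex_Ici a)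
    (fun s hs => (hf s hs).continuousAt.continuousWithinAt) (fun s hs => ?_) (fun s hs => ?_)
  · rw [interior_Ici] at hs
    exact (hf s hs.le).hasDerivWithinAt
  · rw [interior_Ici] at hs
    exact hf' s hs.le

section Barbalat

lemma MeasureTheory.IntegrableOn.tendsto_intervalIntegral_add_atTop {f : ℝ → ℝ} {a : ℝ}
    (hf : IntegrableOn f (Ioi a)) (δ : ℝ) :
    Tendsto (fun t => ∫ s in t..t + δ, f s) atTop (𝓝 0) := by
  have hlim := intervalIntegral_tendsto_integral_Ioi a hf tendsto_id
  have hlimδ :=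
    intervalIntegral_tendsto_integral_Ioi a hf (tendsto_atTop_add_const_right _ δ tendsto_id)
  have hint (b : ℝ) (hb : a ≤ b) : IntervalIntegrable f volume a b :=
    (intervalIntegrable_iff_integrableOn_Ioc_of_le hb).2 (hf.mono_set Ioc_subset_Ioi_self)
  have hdiff : Tendsto (fun t => (∫ s in a..t + δ, f s) - ∫ s in a..t, f s) atTop (𝓝 0) := by
    simpa using hlimδ.sub hlim
  refine hdiff.congr' ?_
  filter_upwards [eventually_ge_atTop a, eventually_ge_atTop (a - δ)] with t ht htδ
  exact intervalIntegral.integral_interval_sub_left (hint _ (by linarith)) (hint t ht)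

lemma mul_sub_le_integral_of_abs_deriv_le {f f' : ℝ → ℝ} {L t δ : ℝ}
    (hf : ∀ s, t ≤ s → HasDerivAt f (f' s) s) (hf' : ∀ s, t ≤ s → |f' s| ≤ L) (hδ : 0 ≤ δ) :
    δ * (f t - L * δ) ≤ ∫ s in t..t + δ, f s := by
  have hlow : ∀ s ∈ Icc t (t + δ), f t - L * δ ≤ f s := by
    intro s hs
    have := (convex_Ici t).norm_image_sub_le_of_norm_hasDerivWithin_le
      (fun r hr => (hf r hr).hasDerivWithinAt) (fun r hr => hf' r hr) self_mem_Ici hs.1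
    rw [Real.norm_eq_abs, Real.norm_eq_abs, abs_of_nonneg (sub_nonneg.2 hs.1)] at this
    have hL : 0 ≤ L := (abs_nonneg _).trans (hf' t le_rfl)
    nlinarith [neg_abs_le (f s - f t), hs.2]
  have hcont : ContinuousOn f (Icc t (t + δ)) := fun s hs =>
    (hf s hs.1).continuousAt.continuousWithinAt
  have := intervalIntegral.integral_mono_on (μ := volume) (by linarith) intervalIntegrable_const
    (hcont.intervalIntegrable_of_Icc (by linarith)) hlow
  rw [intervalIntegral.integral_const, add_sub_cancel_left, smul_eq_mul] at this
  exact this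

/-- Barbalat's lemma. -/
theorem tendsto_zero_of_integral_le_of_abs_deriv_le {f f' : ℝ → ℝ} {L C : ℝ}
    (hf : ∀ t, 0 ≤ t → HasDerivAt f (f' t) t) (hf' : ∀ t, 0 ≤ t → |f' t| ≤ L)
    (hf0 : ∀ t, 0 ≤ t → 0 ≤ f t) (hC : ∀ t, 0 ≤ t → ∫ s in 0..t, f s ≤ C) :
    Tendsto f atTop (𝓝 0) := by
  have hint : IntegrableOn f (Ioi 0) := by
    refine integrableOn_Ioi_of_intervalIntegral_norm_bounded C 0 (fun t => ?_) tendsto_id ?_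
    · refine (ContinuousOn.integrableOn_Icc fun s hs => ?_).mono_set Ioc_subset_Icc_self
      exact (hf s hs.1).continuousAt.continuousWithinAt
    · filter_upwards [eventually_ge_atTop 0] with t ht
      refine le_of_eq_of_le (intervalIntegral.integral_congr fun s hs => ?_) (hC t ht)
      rw [id, uIcc_of_le ht] at hs
      exact Real.norm_of_nonneg (hf0 s hs.1)
  have hL : 0 ≤ L := (abs_nonneg _).trans (hf' 0 le_rfl)
  refine tendsto_order.2 ⟨fun b hb => ?_, fun b hb => ?_⟩
  · filter_upwards [eventually_ge_atTop 0] with t ht using hb.trans_le (hf0 t ht)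
  set δ := b / (2 * (L + 1))
  have hδ : 0 < δ := by positivity
  have hLδ : L * δ ≤ b / 2 := by
    rw [mul_div_assoc', div_le_div_iff₀ (by positivity) two_pos]
    nlinarith
  -- `f t ≥ b` would force `∫ f ≥ δ * b / 2` on `[t, t + δ]`, but these integrals tend to `0`.
  filter_upwards [eventually_ge_atTop 0, (hint.tendsto_intervalIntegral_add_atTop δ).eventually
    (gt_mem_nhds (show (0 : ℝ) < δ * (b / 2) by positivity))] with t ht hsmall
  have := mul_sub_le_integral_of_abs_deriv_le (f := f) (t := t) (δ := δ)
    (fun s hs => hf s (ht.trans hs)) (fun s hs => hf' s (ht.trans hs)) hδ.le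
  have : f t - L * δ < b / 2 := lt_of_mul_lt_mul_left (this.trans_lt hsmall) hδ.le
  linarith

end Barbalat

section Riccati

variable {ι κ : Type*} [Fintype ι] [DecidableEq ι] [Fintype κ]
  {A : Matrix ι ι ℝ} {B : Matrix ι κ ℝ} {P : Matrix ι ι ℝ}

lemma riccati_dotProduct_eq (hPt : Pᵀ = P) (hRic : Aᵀ * P + P * A - P * B * Bᵀ * P + 1 = 0)
    (z : ι → ℝ) (w : κ → ℝ) :
    (A *ᵥ z + B *ᵥ w) ⬝ᵥ (P *ᵥ z) + z ⬝ᵥ (P *ᵥ (A *ᵥ z + B *ᵥ w)) =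
      (Bᵀ * P) *ᵥ z ⬝ᵥ (Bᵀ * P) *ᵥ z - z ⬝ᵥ z + 2 * ((Bᵀ * P) *ᵥ z ⬝ᵥ w) := by
  have hsym : Aᵀ * P + P * A = (Bᵀ * P)ᵀ * (Bᵀ * P) - 1 := by
    rw [transpose_mul, transpose_transpose, hPt, ← Matrix.mul_assoc, eq_sub_iff_add_eq,
      ← sub_eq_zero, ← hRic]
    abel
  have hA : (A *ᵥ z) ⬝ᵥ (P *ᵥ z) + z ⬝ᵥ (P *ᵥ (A *ᵥ z)) = z ⬝ᵥ ((Aᵀ * P + P * A) *ᵥ z) := by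
    rw [add_mulVec, dotProduct_add, ← mulVec_mulVec, ← mulVec_mulVec, mulVec_transpose,
      dotProduct_comm (A *ᵥ z), dotProduct_mulVec, dotProduct_comm (_ ᵥ* A)]
  have hB : (B *ᵥ w) ⬝ᵥ (P *ᵥ z) = (Bᵀ * P) *ᵥ z ⬝ᵥ w := by
    rw [dotProduct_comm, dotProduct_mulVec, ← mulVec_transpose, ← mulVec_mulVec]
  have hB' : z ⬝ᵥ (P *ᵥ (B *ᵥ w)) = (Bᵀ * P) *ᵥ z ⬝ᵥ w := by
    rw [← hB, dotProduct_comm, dotProduct_mulVec, ← mulVec_transpose, hPt]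
  rw [hsym, sub_mulVec, one_mulVec, dotProduct_sub, dotProduct_transpose_mul_self_mulVec] at hA
  rw [mulVec_add, add_dotProduct, dotProduct_add, hB', hB]
  linarith

/-- By `riccati_dotProduct_eq` and `2 ⟪Bᵀ P z, w⟫ ≤ ‖Bᵀ P z‖² + ‖w‖²`, the hypothesis `hγ` gives
`(zᵀ P z)' ≤ γ - ‖z‖²`. -/
theorem riccati_energy_estimate (hPt : Pᵀ = P)
    (hRic : Aᵀ * P + P * A - P * B * Bᵀ * P + 1 = 0)
    {z : ℝ → ι → ℝ} {w : ℝ → κ → ℝ} {Γ γ : ℝ → ℝ}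
    (hz : ∀ t, 0 ≤ t → HasDerivAt z (A *ᵥ z t + B *ᵥ w t) t)
    (hΓ : ∀ t, 0 ≤ t → HasDerivAt Γ (γ t) t)
    (hγ : ∀ t, 0 ≤ t → 2 * ((Bᵀ * P) *ᵥ z t ⬝ᵥ (Bᵀ * P) *ᵥ z t) + w t ⬝ᵥ w t ≤ γ t)
    {t : ℝ} (ht : 0 ≤ t) :
    z t ⬝ᵥ (P *ᵥ z t) + ∫ s in 0..t, z s ⬝ᵥ z s ≤ z 0 ⬝ᵥ (P *ᵥ z 0) + (Γ t - Γ 0) := by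
  have hΓV (s : ℝ) (hs : 0 ≤ s) := (hΓ s hs).sub ((hz s hs).dotProduct ((hz s hs).mulVec P))
  have := intervalIntegral.integral_le_sub_of_hasDeriv_right_of_le ht
    (fun s hs => (hΓV s hs.1).continuousAt.continuousWithinAt)
    (fun s hs => (hΓV s hs.1.le).hasDerivWithinAt)
    (ContinuousOn.integrableOn_Icc fun s hs =>
      (hz s hs.1).dotProduct_self.continuousAt.continuousWithinAt)
    (fun s hs => by
      rw [riccati_dotProduct_eq hPt hRic]
      linarith [hγ s hs.1.le, two_mul_dotProduct_le ((Bᵀ * P) *ᵥ z s) (w s)])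
  simp only [Pi.sub_apply] at this
  linarith

end Riccati

structure IsAdaptiveClosedLoop {α ι κ : Type*} [Fintype α] [Fintype ι] [Fintype κ]
    (A : Matrix ι ι ℝ) (B : Matrix ι κ ℝ) (P : Matrix ι ι ℝ) (a : α → α → ℝ)
    (x : α → ℝ → ι → ℝ) (u : α → ℝ → κ → ℝ) (ρ : α → ℝ → ℝ) (ζ : α → ℝ → ι → ℝ) : Prop where
  relativeState_eq : ∀ i t, ζ i t = ∑ j, a i j • (x i t - x j t)
  input_eq : ∀ i t, 0 ≤ t → u i t = -(ρ i t) • (Bᵀ * P) *ᵥ ζ i t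
  hasDerivAt_state : ∀ i t, 0 ≤ t → HasDerivAt (x i) (A *ᵥ x i t + B *ᵥ u i t) t
  hasDerivAt_gain : ∀ i t, 0 ≤ t → HasDerivAt (ρ i) (ζ i t ⬝ᵥ ((P * B * Bᵀ * P) *ᵥ ζ i t)) t

namespace IsAdaptiveClosedLoop

variable {α ι κ : Type*} [Fintype α] [Fintype ι] [Fintype κ]
  {A : Matrix ι ι ℝ} {B : Matrix ι κ ℝ} {P : Matrix ι ι ℝ} {a : α → α → ℝ}
  {x : α → ℝ → ι → ℝ} {u : α → ℝ → κ → ℝ} {ρ : α → ℝ → ℝ} {ζ : α → ℝ → ι → ℝ}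

lemma hasDerivAt_relativeState (h : IsAdaptiveClosedLoop A B P a x u ρ ζ) (i : α) (t : ℝ)
    (ht : 0 ≤ t) : HasDerivAt (ζ i) (A *ᵥ ζ i t + B *ᵥ ∑ j, a i j • (u i t - u j t)) t := by
  have hsum : HasDerivAt (fun s => ∑ j, a i j • (x i s - x j s))
      (∑ j, a i j • ((A *ᵥ x i t + B *ᵥ u i t) - (A *ᵥ x j t + B *ᵥ u j t))) t :=
    HasDerivAt.fun_sum fun j _ =>
      ((h.hasDerivAt_state i t ht).sub (h.hasDerivAt_state j t ht)).const_smul (a i j)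
  have hval : ∑ j, a i j • ((A *ᵥ x i t + B *ᵥ u i t) - (A *ᵥ x j t + B *ᵥ u j t)) =
      A *ᵥ ζ i t + B *ᵥ ∑ j, a i j • (u i t - u j t) := by
    simp only [h.relativeState_eq i t, mulVec_sum, mulVec_smul, mulVec_sub,
      ← Finset.sum_add_distrib, ← smul_add]
    exact Finset.sum_congr rfl fun j _ => by rw [add_sub_add_comm]
  rw [hval] at hsum
  exact hsum.congr_of_eventuallyEq (Eventually.of_forall (h.relativeState_eq i))

lemma hasDerivAt_gain_eq_dotProduct_self (h : IsAdaptiveClosedLoop A B P a x u ρ ζ)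
    (hPt : Pᵀ = P) (i : α) (t : ℝ) (ht : 0 ≤ t) :
    HasDerivAt (ρ i) ((Bᵀ * P) *ᵥ ζ i t ⬝ᵥ (Bᵀ * P) *ᵥ ζ i t) t := by
  have hPBBP : (Bᵀ * P)ᵀ * (Bᵀ * P) = P * B * Bᵀ * P := by
    rw [transpose_mul, transpose_transpose, hPt, Matrix.mul_assoc (P * B)]
  rw [← dotProduct_transpose_mul_self_mulVec, hPBBP]
  exact h.hasDerivAt_gain i t ht

lemma exists_abs_gain_le (h : IsAdaptiveClosedLoop A B P a x u ρ ζ) (hPt : Pᵀ = P)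
    (hbdd : ∀ i, ∃ M : ℝ, ∀ t, 0 ≤ t → ρ i t ≤ M) :
    ∃ R, ∀ i t, 0 ≤ t → |ρ i t| ≤ R := by
  choose M hM using hbdd
  obtain ⟨R, hR⟩ := Finite.exists_le fun i => max |ρ i 0| |M i|
  refine ⟨R, fun i t ht => (abs_le_max_abs_abs ?_ (hM i t ht)).trans (hR i)⟩
  exact monotoneOn_Ici_of_hasDerivAt_nonneg (h.hasDerivAt_gain_eq_dotProduct_self hPt i)
    (fun s _ => dotProduct_self_nonneg _) self_mem_Ici ht ht

lemma dotProduct_self_coupling_le (h : IsAdaptiveClosedLoop A B P a x u ρ ζ) {R : ℝ}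
    (hR : ∀ i t, 0 ≤ t → |ρ i t| ≤ R) (i : α) {t : ℝ} (ht : 0 ≤ t) :
    (∑ j, a i j • (u i t - u j t)) ⬝ᵥ (∑ j, a i j • (u i t - u j t)) ≤
      4 * Fintype.card α * (∑ j, a i j ^ 2) * R ^ 2 *
        ∑ j, (Bᵀ * P) *ᵥ ζ j t ⬝ᵥ (Bᵀ * P) *ᵥ ζ j t := by
  calc _ ≤ 4 * Fintype.card α * (∑ j, a i j ^ 2) * ∑ j, u j t ⬝ᵥ u j t :=
        dotProduct_self_sum_smul_sub_le (a i) (u · t) i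
    _ ≤ 4 * Fintype.card α * (∑ j, a i j ^ 2) *
          ∑ j, R ^ 2 * ((Bᵀ * P) *ᵥ ζ j t ⬝ᵥ (Bᵀ * P) *ᵥ ζ j t) := by
        gcongr with j
        rw [h.input_eq j t ht, smul_dotProduct, dotProduct_smul, smul_eq_mul, smul_eq_mul,
          ← mul_assoc, ← sq, neg_sq, ← sq_abs]
        gcongr
        exacts [dotProduct_self_nonneg _, hR j t ht]
    _ = _ := by rw [← Finset.mul_sum]; ring

lemma exists_energy_bound [DecidableEq ι] (h : IsAdaptiveClosedLoop A B P a x u ρ ζ)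
    (hP : P.PosDef) (hRic : Aᵀ * P + P * A - P * B * Bᵀ * P + 1 = 0)
    (hbdd : ∀ i, ∃ M : ℝ, ∀ t, 0 ≤ t → ρ i t ≤ M) (i : α) :
    ∃ C, ∀ t, 0 ≤ t → ζ i t ⬝ᵥ (P *ᵥ ζ i t) ≤ C ∧ ∫ s in 0..t, ζ i s ⬝ᵥ ζ i s ≤ C := by
  obtain ⟨R, hR⟩ := h.exists_abs_gain_le hP.transpose_eq hbdd
  choose M hM using hbdd
  set K := 4 * Fintype.card α * (∑ j, a i j ^ 2) * R ^ 2 + 2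
  have hK : 0 ≤ K := by positivity
  -- The forcing term is `K` times the total gain growth rate `∑ⱼ ρⱼ'`.
  have hγ (t : ℝ) (ht : 0 ≤ t) :
      2 * ((Bᵀ * P) *ᵥ ζ i t ⬝ᵥ (Bᵀ * P) *ᵥ ζ i t) +
          (∑ j, a i j • (u i t - u j t)) ⬝ᵥ (∑ j, a i j • (u i t - u j t)) ≤
        K * ∑ j, (Bᵀ * P) *ᵥ ζ j t ⬝ᵥ (Bᵀ * P) *ᵥ ζ j t := by
    have hyi := Finset.single_le_sum (fun j _ => dotProduct_self_nonneg ((Bᵀ * P) *ᵥ ζ j t))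
      (Finset.mem_univ i)
    linarith [h.dotProduct_self_coupling_le hR i ht]
  refine ⟨ζ i 0 ⬝ᵥ (P *ᵥ ζ i 0) + K * ∑ j, (M j - ρ j 0), fun t ht => ?_⟩
  have hE := riccati_energy_estimate hP.transpose_eq hRic (h.hasDerivAt_relativeState i)
    (Γ := fun s => K * ∑ j, ρ j s) (fun s hs => (HasDerivAt.fun_sum fun j _ =>
      h.hasDerivAt_gain_eq_dotProduct_self hP.transpose_eq j s hs).const_mul K) hγ ht
  have hV : 0 ≤ ζ i t ⬝ᵥ (P *ᵥ ζ i t) := by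
    simpa using hP.posSemidef.dotProduct_mulVec_nonneg (ζ i t)
  have hI : 0 ≤ ∫ s in 0..t, ζ i s ⬝ᵥ ζ i s :=
    intervalIntegral.integral_nonneg ht fun s _ => dotProduct_self_nonneg _
  have hΓ : K * ∑ j, ρ j t - K * ∑ j, ρ j 0 ≤ K * ∑ j, (M j - ρ j 0) := by
    rw [← mul_sub, ← Finset.sum_sub_distrib]
    gcongr with j
    exact hM j t ht
  constructor <;> linarith

lemma exists_dotProduct_self_le [DecidableEq ι] (h : IsAdaptiveClosedLoop A B P a x u ρ ζ)
    (hP : P.PosDef) (hRic : Aᵀ * P + P * A - P * B * Bᵀ * P + 1 = 0)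
    (hbdd : ∀ i, ∃ M : ℝ, ∀ t, 0 ≤ t → ρ i t ≤ M) :
    ∃ Z, ∀ i t, 0 ≤ t → ζ i t ⬝ᵥ ζ i t ≤ Z := by
  obtain ⟨c, hc0, hc⟩ := hP.exists_dotProduct_self_le
  choose C hC using h.exists_energy_bound hP hRic hbdd
  obtain ⟨C', hC'⟩ := Finite.exists_le C
  exact ⟨c * C', fun i t ht =>
    (hc _).trans (mul_le_mul_of_nonneg_left ((hC i t ht).1.trans (hC' i)) hc0)⟩

lemma exists_velocity_bound [DecidableEq ι] (h : IsAdaptiveClosedLoop A B P a x u ρ ζ)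
    (hP : P.PosDef) (hRic : Aᵀ * P + P * A - P * B * Bᵀ * P + 1 = 0)
    (hbdd : ∀ i, ∃ M : ℝ, ∀ t, 0 ≤ t → ρ i t ≤ M) (i : α) :
    ∃ L, ∀ t, 0 ≤ t →
      (A *ᵥ ζ i t + B *ᵥ ∑ j, a i j • (u i t - u j t)) ⬝ᵥ
        (A *ᵥ ζ i t + B *ᵥ ∑ j, a i j • (u i t - u j t)) ≤ L := by
  obtain ⟨R, hR⟩ := h.exists_abs_gain_le hP.transpose_eq hbdd
  obtain ⟨Z, hZ⟩ := h.exists_dotProduct_self_le hP hRic hbdd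
  set cA := ∑ k, ∑ l, A k l ^ 2
  set cB := ∑ k, ∑ l, B k l ^ 2
  set cY := ∑ k, ∑ l, (Bᵀ * P) k l ^ 2
  set K := 4 * Fintype.card α * (∑ j, a i j ^ 2) * R ^ 2
  refine ⟨2 * (cA * Z) + 2 * (cB * (K * (Fintype.card α * (cY * Z)))), fun t ht => ?_⟩
  calc _ ≤ 2 * ((A *ᵥ ζ i t) ⬝ᵥ (A *ᵥ ζ i t)) +
          2 * ((B *ᵥ ∑ j, a i j • (u i t - u j t)) ⬝ᵥ (B *ᵥ ∑ j, a i j • (u i t - u j t))) :=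
        dotProduct_self_add_le _ _
    _ ≤ 2 * (cA * (ζ i t ⬝ᵥ ζ i t)) +
          2 * (cB * ((∑ j, a i j • (u i t - u j t)) ⬝ᵥ (∑ j, a i j • (u i t - u j t)))) := by
        gcongr <;> exact dotProduct_self_mulVec_le _ _
    _ ≤ 2 * (cA * Z) + 2 * (cB * (K * ∑ j, (Bᵀ * P) *ᵥ ζ j t ⬝ᵥ (Bᵀ * P) *ᵥ ζ j t)) := by
        gcongr
        exacts [hZ i t ht, h.dotProduct_self_coupling_le hR i ht]
    _ ≤ _ := by
        gcongr
        refine (Finset.sum_le_card_nsmul _ _ (cY * Z) fun j _ => ?_).trans_eq (by simp)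
        exact (dotProduct_self_mulVec_le _ _).trans (by gcongr; exact hZ j t ht)

end IsAdaptiveClosedLoop

theorem bounded_gains_imply_network_stability_general
    {n m N : ℕ}
    (A : Matrix (Fin n) (Fin n) ℝ) (B : Matrix (Fin n) (Fin m) ℝ)
    (P : Matrix (Fin n) (Fin n) ℝ) (hP : P.PosDef)
    (hRic : Aᵀ * P + P * A - P * B * Bᵀ * P + 1 = 0)
    (a : Fin N → Fin N → ℝ)
    (x : Fin N → ℝ → (Fin n → ℝ)) (u : Fin N → ℝ → (Fin m → ℝ))
    (ρ : Fin N → ℝ → ℝ) (ζ : Fin N → ℝ → (Fin n → ℝ))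
    (hζ : ∀ i t, ζ i t = ∑ j, a i j • (x i t - x j t))
    (hu : ∀ i t, 0 ≤ t → u i t = -(ρ i t) • (Bᵀ * P) *ᵥ ζ i t)
    (hx : ∀ i t, 0 ≤ t → HasDerivAt (x i) (A *ᵥ x i t + B *ᵥ u i t) t)
    (hρ : ∀ i t, 0 ≤ t →
      HasDerivAt (ρ i) (ζ i t ⬝ᵥ ((P * B * Bᵀ * P) *ᵥ ζ i t)) t)
    (hbdd : ∀ i, ∃ M : ℝ, ∀ t, 0 ≤ t → ρ i t ≤ M) :
    ∀ i, Tendsto (fun t => ζ i t) atTop (nhds 0) := by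
  intro i
  have h : IsAdaptiveClosedLoop A B P a x u ρ ζ := ⟨hζ, hu, hx, hρ⟩
  obtain ⟨C, hC⟩ := h.exists_energy_bound hP hRic hbdd i
  obtain ⟨Z, hZ⟩ := h.exists_dotProduct_self_le hP hRic hbdd
  obtain ⟨L, hL⟩ := h.exists_velocity_bound hP hRic hbdd i
  refine tendsto_zero_of_dotProduct_self_tendsto_zero <|
    tendsto_zero_of_integral_le_of_abs_deriv_le
      (fun t ht => (h.hasDerivAt_relativeState i t ht).dotProduct_self)
      (fun t ht => (abs_two_mul_dotProduct_le _ _).trans (add_le_add (hZ i t ht) (hL t ht)))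
      (fun t _ => dotProduct_self_nonneg _) (fun t ht => (hC t ht).2)

/-- **Lemma 3.** If every adaptive gain ρᵢ is bounded on [0,∞), then
ζᵢ(t) → 0 as t → ∞ for every i. -/
theorem bounded_gains_imply_network_stability
    {n m N : ℕ} (hN : 1 ≤ N)
    (A : Matrix (Fin n) (Fin n) ℝ) (B : Matrix (Fin n) (Fin m) ℝ)
    (P : Matrix (Fin n) (Fin n) ℝ) (hP : P.PosDef)
    (hRic : Aᵀ * P + P * A - P * B * Bᵀ * P + 1 = 0)
    (a : Fin N → Fin N → ℝ)
    (ha : ∀ i j, 0 ≤ a i j) (haii : ∀ i, a i i = 0)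
    (x : Fin N → ℝ → (Fin n → ℝ)) (u : Fin N → ℝ → (Fin m → ℝ))
    (ρ : Fin N → ℝ → ℝ) (ζ : Fin N → ℝ → (Fin n → ℝ))
    (hζ : ∀ i t, ζ i t = ∑ j, a i j • (x i t - x j t))
    (hu : ∀ i t, 0 ≤ t → u i t = -(ρ i t) • (Bᵀ * P) *ᵥ ζ i t)
    (hx : ∀ i t, 0 ≤ t → HasDerivAt (x i) (A *ᵥ x i t + B *ᵥ u i t) t)
    (hρ : ∀ i t, 0 ≤ t →
      HasDerivAt (ρ i) (ζ i t ⬝ᵥ ((P * B * Bᵀ * P) *ᵥ ζ i t)) t)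
    (hbdd : ∀ i, ∃ M : ℝ, ∀ t, 0 ≤ t → ρ i t ≤ M) :
    ∀ i, Tendsto (fun t => ζ i t) atTop (nhds 0) :=
  bounded_gains_imply_network_stability_general A B P hP hRic a x u ρ ζ hζ hu hx hρ hbdd
end

section
/- Let a_{ij} ≥ 0 (1 ≤ i, j ≤ N) with a_{ii} = 0, let x_1,…,x_N : [0,∞) → ℝ^n, and define ζ_i(t) = Σ_{j=1}^N a_{ij}(x_i(t) − x_j(t)). Let S ⊆ {1,…,N} be a basic bicomponent: S is nonempty, any two nodes of S are mutually reachable along directed edges of positive weight between nodes of S, and a_{ij} = 0 whenever i ∈ S and j ∉ S. If ζ_i(t) → 0 as t → ∞ for all i ∈ S, then x_p(t) − x_q(t) → 0 as t → ∞ for all p, q ∈ S; equivalently, there is a trajectory x_s such that x_j(t) − x_s(t) → 0 for every j ∈ S. (Lemma 2: synchronization within each basic bicomponent.) -/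
/-!
The signals `ζ i t`, `i ∈ S`, are the image of the joint state `x t` under the rows of the graph
Laplacian indexed by `S`, a linear map `L`. A maximum principle shows that `ker L` consists of
states that agree on `S`: at a maximizer of a real function in the kernel every term
`a i j (f i - f j)` is nonnegative, so the maximum spreads backwards along edges, and every node of
`S` reaches a maximizer. Hence `x_p - x_q` factors linearly through `L`; in finite dimensions the
factor is continuous, so `L (x t) → 0` forces `x_p t - x_q t → 0`.
-/

open Filter Topology

lemma LinearMap.exists_comp_eq_of_ker_le {K V W U : Type*} [Field K]
    [AddCommGroup V] [Module K V] [AddCommGroup W] [Module K W] [AddCommGroup U] [Module K U]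
    (ψ : V →ₗ[K] W) (φ : V →ₗ[K] U) (h : ker ψ ≤ ker φ) :
    ∃ A : W →ₗ[K] U, A ∘ₗ ψ = φ := by
  obtain ⟨g, hg⟩ := (ker ψ).liftQ ψ le_rfl |>.exists_leftInverse_of_injective
    ((ker ψ).ker_liftQ_eq_bot ψ le_rfl le_rfl)
  refine ⟨(ker ψ).liftQ φ h ∘ₗ g, LinearMap.ext fun v => ?_⟩
  have hv : g (ψ v) = (ker ψ).mkQ v := LinearMap.congr_fun hg ((ker ψ).mkQ v)
  simp [hv]

lemma tendsto_zero_of_ker_le {α 𝕜 V W U : Type*} [NontriviallyNormedField 𝕜] [CompleteSpace 𝕜]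
    [AddCommGroup V] [Module 𝕜 V]
    [AddCommGroup W] [Module 𝕜 W] [TopologicalSpace W] [IsTopologicalAddGroup W]
    [ContinuousSMul 𝕜 W] [T2Space W] [FiniteDimensional 𝕜 W]
    [AddCommGroup U] [Module 𝕜 U] [TopologicalSpace U] [IsTopologicalAddGroup U]
    [ContinuousSMul 𝕜 U]
    (ψ : V →ₗ[𝕜] W) (φ : V →ₗ[𝕜] U) (h : LinearMap.ker ψ ≤ LinearMap.ker φ)
    {l : Filter α} {v : α → V} (hv : Tendsto (fun t => ψ (v t)) l (𝓝 0)) :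
    Tendsto (fun t => φ (v t)) l (𝓝 0) := by
  obtain ⟨A, rfl⟩ := ψ.exists_comp_eq_of_ker_le φ h
  simpa [Function.comp_def] using (A.continuous_of_finiteDimensional.tendsto 0).comp hv

section Laplacian

variable {ι : Type*} [Fintype ι] {a : ι → ι → ℝ} {S : Set ι}

lemma eq_of_sum_mul_sub_eq_zero (ha : ∀ i j, 0 ≤ a i j)
    (hSconn : ∀ p ∈ S, ∀ q ∈ S,
      Relation.ReflTransGen (fun j i => j ∈ S ∧ i ∈ S ∧ 0 < a i j) q p)
    (hSnoin : ∀ i ∈ S, ∀ j ∉ S, a i j = 0)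
    {f : ι → ℝ} (hf : ∀ i ∈ S, ∑ j, a i j * (f i - f j) = 0) :
    ∀ p ∈ S, ∀ q ∈ S, f p = f q := by
  intro p hp q hq
  obtain ⟨m, hmS, hmax⟩ := S.exists_max_image f S.toFinite ⟨p, hp⟩
  have spread : ∀ i ∈ S, f i = f m → ∀ j, 0 < a i j → f j = f m := by
    intro i hi hfi j hij
    have hterm : ∀ k ∈ Finset.univ, 0 ≤ a i k * (f i - f k) := by
      intro k _
      by_cases hk : k ∈ S
      · exact mul_nonneg (ha i k) (by linarith [hmax k hk])
      · simp [hSnoin i hi k hk]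
    have hj := (Finset.sum_eq_zero_iff_of_nonneg hterm).1 (hf i hi) j (Finset.mem_univ j)
    linarith [(mul_eq_zero.1 hj).resolve_left hij.ne']
  have hall : ∀ k ∈ S, f k = f m := by
    intro k hk
    induction hSconn m hmS k hk using Relation.ReflTransGen.head_induction_on with
    | refl => rfl
    | head hedge _ ih =>
      obtain ⟨-, hcS, hpos⟩ := hedge
      exact spread _ hcS (ih hcS) _ hpos
  rw [hall p hp, hall q hq]

lemma eq_of_sum_smul_sub_eq_zero {E : Type*} [AddCommGroup E] [Module ℝ E]
    (ha : ∀ i j, 0 ≤ a i j)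
    (hSconn : ∀ p ∈ S, ∀ q ∈ S,
      Relation.ReflTransGen (fun j i => j ∈ S ∧ i ∈ S ∧ 0 < a i j) q p)
    (hSnoin : ∀ i ∈ S, ∀ j ∉ S, a i j = 0)
    {y : ι → E} (hy : ∀ i ∈ S, ∑ j, a i j • (y i - y j) = 0) :
    ∀ p ∈ S, ∀ q ∈ S, y p = y q := by
  intro p hp q hq
  rw [← sub_eq_zero, ← Module.forall_dual_apply_eq_zero_iff ℝ]
  intro ℓ
  have hℓ : ∀ i ∈ S, ∑ j, a i j * (ℓ (y i) - ℓ (y j)) = 0 := by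
    intro i hi
    simpa [map_sum, map_sub] using congrArg ℓ (hy i hi)
  rw [map_sub, eq_of_sum_mul_sub_eq_zero ha hSconn hSnoin hℓ p hp q hq, sub_self]

variable (a S) (E : Type*) [AddCommGroup E] [Module ℝ E]

def laplacianRows : (ι → E) →ₗ[ℝ] (S → E) :=
  LinearMap.pi fun i => ∑ j, a i j • (LinearMap.proj (R := ℝ) (φ := fun _ : ι => E) i - .proj j)

variable {a S E}

@[simp]
lemma laplacianRows_apply (y : ι → E) (i : S) :
    laplacianRows a S E y i = ∑ j, a i j • (y i - y j) := by
  simp [laplacianRows]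

lemma ker_laplacianRows_le (ha : ∀ i j, 0 ≤ a i j)
    (hSconn : ∀ p ∈ S, ∀ q ∈ S,
      Relation.ReflTransGen (fun j i => j ∈ S ∧ i ∈ S ∧ 0 < a i j) q p)
    (hSnoin : ∀ i ∈ S, ∀ j ∉ S, a i j = 0) {p q : ι} (hp : p ∈ S) (hq : q ∈ S) :
    LinearMap.ker (laplacianRows a S E) ≤
      LinearMap.ker (LinearMap.proj (R := ℝ) (φ := fun _ : ι => E) p - .proj q) := by
  intro y hy
  have hy' : ∀ i ∈ S, ∑ j, a i j • (y i - y j) = 0 := fun i hi => by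
    simpa using congrFun (LinearMap.mem_ker.1 hy) ⟨i, hi⟩
  rw [LinearMap.mem_ker, LinearMap.sub_apply, sub_eq_zero]
  exact eq_of_sum_smul_sub_eq_zero ha hSconn hSnoin hy' p hp q hq

end Laplacian

theorem synchronization_within_basic_bicomponent_general
    {n N : ℕ} (a : Fin N → Fin N → ℝ)
    (ha : ∀ i j, 0 ≤ a i j)
    (x : Fin N → ℝ → (Fin n → ℝ)) (ζ : Fin N → ℝ → (Fin n → ℝ))
    (hζ : ∀ i t, ζ i t = ∑ j, a i j • (x i t - x j t))
    (S : Set (Fin N))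
    (hSconn : ∀ p ∈ S, ∀ q ∈ S,
      Relation.ReflTransGen (fun j i => j ∈ S ∧ i ∈ S ∧ 0 < a i j) q p)
    (hSnoin : ∀ i ∈ S, ∀ j ∉ S, a i j = 0)
    (hstab : ∀ i ∈ S, Tendsto (fun t => ζ i t) atTop (nhds 0)) :
    ∀ p ∈ S, ∀ q ∈ S, Tendsto (fun t => x p t - x q t) atTop (nhds 0) := by
  intro p hp q hq
  have hsignal : Tendsto (fun t => laplacianRows a S _ fun i => x i t) atTop (𝓝 0) :=
    tendsto_pi_nhds.2 fun i => by simpa only [laplacianRows_apply, ← hζ, Pi.zero_apply] using hstab i i.2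
  exact tendsto_zero_of_ker_le _ _
    (ker_laplacianRows_le (E := Fin n → ℝ) ha hSconn hSnoin hp hq) hsignal

/-- **Lemma 2 (synchronization within each basic bicomponent).** Let `S` be a
basic bicomponent of the communication graph: `S` is nonempty, any two nodes of
`S` are mutually reachable along directed edges of positive weight between
nodes of `S`, and `S` has no incoming edges. If `ζᵢ(t) → 0` for all `i ∈ S`,
then `x_p(t) - x_q(t) → 0` for all `p, q ∈ S`. -/
theorem synchronization_within_basic_bicomponent
    {n N : ℕ} (a : Fin N → Fin N → ℝ)
    (ha : ∀ i j, 0 ≤ a i j) (haii : ∀ i, a i i = 0)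
    (x : Fin N → ℝ → (Fin n → ℝ)) (ζ : Fin N → ℝ → (Fin n → ℝ))
    (hζ : ∀ i t, ζ i t = ∑ j, a i j • (x i t - x j t))
    (S : Set (Fin N)) (hSne : S.Nonempty)
    (hSconn : ∀ p ∈ S, ∀ q ∈ S,
      Relation.ReflTransGen (fun j i => j ∈ S ∧ i ∈ S ∧ 0 < a i j) q p)
    (hSnoin : ∀ i ∈ S, ∀ j ∉ S, a i j = 0)
    (hstab : ∀ i ∈ S, Tendsto (fun t => ζ i t) atTop (nhds 0)) :
    ∀ p ∈ S, ∀ q ∈ S, Tendsto (fun t => x p t - x q t) atTop (nhds 0) :=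
  synchronization_within_basic_bicomponent_general a ha x ζ hζ S hSconn hSnoin hstab
end

section
/- Let L ∈ ℝ^{N×N} have nonpositive off-diagonal entries and zero row sums (a Laplacian matrix), and suppose L is partitioned in block upper-triangular form L = [[L₀, M],[0, L']] where L₀ ∈ ℝ^{p×p} is invertible. Then the matrix −L₀⁻¹M has all entries nonnegative and each of its rows sums to 1, i.e., (−L₀⁻¹M)𝟙 = 𝟙. (Algebraic core of the convex-combination coefficients β_{j,i} in Lemma 2, equations (9)–(10).) -/
/-!
Write `X = -L₀⁻¹ M`, so that `L₀ X = -M`. Since `L` has zero row sums, `L₀ 𝟙 = -M 𝟙`, whence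
`X 𝟙 = 𝟙`. For the signs, `L₀` is a Z-matrix with nonnegative row sums (the entries of `M` are
nonpositive), and such a matrix, when invertible, satisfies `L₀ x ≥ 0 → x ≥ 0`: if `x` had a
negative minimum, every row of `L₀` indexed by a minimizer would sum to zero and vanish off the
minimizers, making the diagonal block on the minimizers singular, hence `L₀` itself singular.
Apply this to the columns of `X`, for which `L₀ x = -M e_j ≥ 0`.
-/

open Matrix Finset

namespace Matrix

variable {ι κ : Type*} [Fintype ι]

theorem det_eq_zero_of_rows_supported_of_rowSum_eq_zero {R : Type*} [CommRing R] [IsDomain R]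
    [DecidableEq ι] {A : Matrix ι ι R} {p : ι → Prop} [DecidablePred p] (hp : ∃ i, p i)
    (hsupp : ∀ i j, p i → ¬ p j → A i j = 0) (hsum : ∀ i, p i → ∑ j with p j, A i j = 0) :
    A.det = 0 := by
  have hA : A.BlockTriangular (fun i => decide (p i)) := by
    intro i j hij
    simp only [Bool.lt_iff, decide_eq_false_iff_not, decide_eq_true_eq] at hij
    exact hsupp i j hij.2 hij.1
  obtain ⟨i, hi⟩ := hp
  rw [hA.det]
  refine Finset.prod_eq_zero (Finset.mem_image_of_mem _ (mem_univ i)) ?_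
  -- the diagonal block on `p` has zero row sums, so it kills the all-ones vector
  refine exists_mulVec_eq_zero_iff.mp ⟨fun _ => 1, fun h => one_ne_zero (congr_fun h ⟨i, rfl⟩), ?_⟩
  funext k
  have hk : p k := by simpa [hi] using k.2
  simp only [mulVec, dotProduct, toSquareBlock, mul_one, Pi.zero_apply]
  rw [← hsum k hk]
  exact (Finset.sum_subtype _ (by simp [hi]) _).symm

variable {K : Type*} [Field K] [LinearOrder K] [IsStrictOrderedRing K]

theorem rowSum_eq_zero_and_eq_zero_off_argmin {A : Matrix ι ι K} {x : ι → K} {i : ι}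
    (hoff : ∀ j, j ≠ i → A i j ≤ 0) (hrow : 0 ≤ ∑ j, A i j) (hmin : ∀ j, x i ≤ x j)
    (hneg : x i < 0) (hAx : 0 ≤ (A *ᵥ x) i) :
    ∑ j, A i j = 0 ∧ ∀ j, x j ≠ x i → A i j = 0 := by
  have hsplit : (A *ᵥ x) i = ∑ j, A i j * (x j - x i) + x i * ∑ j, A i j := by
    rw [Finset.mul_sum, ← Finset.sum_add_distrib]
    exact Finset.sum_congr rfl fun j _ => by ring
  have hterm : ∀ j ∈ univ, A i j * (x j - x i) ≤ 0 := by
    intro j _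
    rcases eq_or_ne j i with rfl | hji
    · simp
    · exact mul_nonpos_of_nonpos_of_nonneg (hoff j hji) (sub_nonneg.2 (hmin j))
  have hmean : x i * ∑ j, A i j ≤ 0 := mul_nonpos_of_nonpos_of_nonneg hneg.le hrow
  have hdev : ∑ j, A i j * (x j - x i) = 0 := by linarith [Finset.sum_nonpos hterm]
  refine ⟨?_, fun j hj => ?_⟩
  · have : x i * ∑ j, A i j = 0 := by linarith
    exact (mul_eq_zero.1 this).resolve_left hneg.ne
  · have := (Finset.sum_eq_zero_iff_of_nonpos hterm).1 hdev j (mem_univ j)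
    exact (mul_eq_zero.1 this).resolve_right (sub_ne_zero.2 hj)

variable [DecidableEq ι]

theorem nonneg_of_mulVec_nonneg {A : Matrix ι ι K} (hoff : ∀ i j, i ≠ j → A i j ≤ 0)
    (hrow : ∀ i, 0 ≤ ∑ j, A i j) (hA : A.det ≠ 0) {x : ι → K} (hx : 0 ≤ A *ᵥ x) : 0 ≤ x := by
  by_contra hneg
  obtain ⟨i₀, hi₀⟩ : ∃ i, x i < 0 := by simpa [Pi.le_def] using hneg
  obtain ⟨i, -, hmin⟩ := exists_min_image univ x ⟨i₀, mem_univ i₀⟩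
  have hrows : ∀ k, x k = x i → ∑ j, A k j = 0 ∧ ∀ j, x j ≠ x k → A k j = 0 := fun k hk =>
    rowSum_eq_zero_and_eq_zero_off_argmin (fun j hj => hoff k j hj.symm) (hrow k)
      (fun j => hk ▸ hmin j (mem_univ j)) (hk ▸ (hmin i₀ (mem_univ i₀)).trans_lt hi₀) (hx k)
  refine hA (det_eq_zero_of_rows_supported_of_rowSum_eq_zero (p := fun k => x k = x i) ⟨i, rfl⟩
    (fun k j hk hj => (hrows k hk).2 j (hk ▸ hj)) fun k hk => ?_)
  rw [Finset.sum_filter_of_ne fun j _ hj => ?_, (hrows k hk).1]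
  by_contra hji
  exact hj ((hrows k hk).2 j (hk ▸ hji))

theorem neg_inv_mul_nonneg {A : Matrix ι ι K} {M : Matrix ι κ K}
    (hoff : ∀ i j, i ≠ j → A i j ≤ 0) (hrow : ∀ i, 0 ≤ ∑ j, A i j) (hA : A.det ≠ 0)
    (hM : ∀ i j, M i j ≤ 0) (i : ι) (j : κ) : 0 ≤ (-(A⁻¹ * M)) i j := by
  have hAX : A * -(A⁻¹ * M) = -M := by
    rw [Matrix.mul_neg, ← Matrix.mul_assoc, mul_nonsing_inv A (isUnit_iff_ne_zero.2 hA),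
      Matrix.one_mul]
  refine nonneg_of_mulVec_nonneg hoff hrow hA (x := fun k => (-(A⁻¹ * M)) k j) (fun k => ?_) i
  show 0 ≤ (A * -(A⁻¹ * M)) k j
  simpa [hAX] using hM k j

theorem neg_inv_mul_mulVec_one [Fintype κ] {R : Type*} [CommRing R] {A : Matrix ι ι R} {M : Matrix ι κ R}
    (hA : IsUnit A.det) (hsum : ∀ i, ∑ j, A i j + ∑ j, M i j = 0) :
    (-(A⁻¹ * M)) *ᵥ (fun _ => 1) = fun _ => 1 := by
  have hM : M *ᵥ (fun _ => 1) = -(A *ᵥ fun _ => 1) := by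
    funext i
    simp only [mulVec, dotProduct, mul_one, Pi.neg_apply]
    exact eq_neg_of_add_eq_zero_right (hsum i)
  rw [Matrix.neg_mulVec, ← mulVec_mulVec, hM, mulVec_neg, neg_neg, mulVec_mulVec,
    nonsing_inv_mul A hA, one_mulVec]

end Matrix

theorem neg_inv_block_rows_sum_to_one_general
    {p q : ℕ} (L : Matrix (Fin p ⊕ Fin q) (Fin p ⊕ Fin q) ℝ)
    (hoff : ∀ i j, i ≠ j → L i j ≤ 0)
    (hrow : ∀ i, ∑ j, L i j = 0)
    (hL0 : IsUnit (L.submatrix Sum.inl Sum.inl)) :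
    (∀ i j, 0 ≤ (-((L.submatrix Sum.inl Sum.inl)⁻¹ * L.submatrix Sum.inl Sum.inr)) i j) ∧
      (-((L.submatrix Sum.inl Sum.inl)⁻¹ * L.submatrix Sum.inl Sum.inr)) *ᵥ
        (fun _ => (1 : ℝ)) = fun _ => (1 : ℝ) := by
  set L₀ := L.submatrix Sum.inl Sum.inl
  set M := L.submatrix Sum.inl Sum.inr
  have hdet : IsUnit L₀.det := (isUnit_iff_isUnit_det L₀).1 hL0
  have hL₀ : ∀ i j, i ≠ j → L₀ i j ≤ 0 := fun i j hij => hoff _ _ (Sum.inl_injective.ne hij)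
  have hM : ∀ i j, M i j ≤ 0 := fun i j => hoff _ _ Sum.inl_ne_inr
  have hsum : ∀ i, ∑ j, L₀ i j + ∑ j, M i j = 0 := fun i =>
    (Fintype.sum_sum_type _).symm.trans (hrow (Sum.inl i))
  have hrow₀ : ∀ i, 0 ≤ ∑ j, L₀ i j := fun i => by
    linarith [hsum i, Finset.sum_nonpos fun j (_ : j ∈ univ) => hM i j]
  exact ⟨neg_inv_mul_nonneg hL₀ hrow₀ hdet.ne_zero hM, neg_inv_mul_mulVec_one hdet hsum⟩

/-- **Convex-combination coefficients (algebraic core of Lemma 2, eqs. (9)–(10)).**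
Let `L` be a Laplacian matrix (nonpositive off-diagonal entries, zero row sums)
in block upper-triangular form `[[L₀, M],[0, L']]` with `L₀` invertible. Then
`-L₀⁻¹ M` has nonnegative entries and each of its rows sums to `1`. -/
theorem neg_inv_block_rows_sum_to_one
    {p q : ℕ} (L : Matrix (Fin p ⊕ Fin q) (Fin p ⊕ Fin q) ℝ)
    (hoff : ∀ i j, i ≠ j → L i j ≤ 0)
    (hrow : ∀ i, ∑ j, L i j = 0)
    (hlow : ∀ i j, L (Sum.inr i) (Sum.inl j) = 0)
    (hL0 : IsUnit (L.submatrix Sum.inl Sum.inl)) :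
    (∀ i j, 0 ≤ (-((L.submatrix Sum.inl Sum.inl)⁻¹ * L.submatrix Sum.inl Sum.inr)) i j) ∧
      (-((L.submatrix Sum.inl Sum.inl)⁻¹ * L.submatrix Sum.inl Sum.inr)) *ᵥ
        (fun _ => (1 : ℝ)) = fun _ => (1 : ℝ) :=
  neg_inv_block_rows_sum_to_one_general L hoff hrow hL0
end

section
/- Let L ∈ ℝ^{N×N} be the Laplacian matrix of a weighted directed graph that is strongly connected. Then there exist positive reals α_1,…,α_N > 0 and γ > 0 such that, with H = diag(α_1,…,α_N), the matrix HL + LᵀH − 3γ LᵀL is positive semidefinite, i.e., HL + LᵀH ≥ 3γ LᵀL in the Loewner order. (Appendix Lemma on Lyapunov certificates for strongly connected Laplacians.) -/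
/-!
Since `L 𝟙 = 0`, the matrix `Lᵀ` has a nonzero kernel vector `v`. By the triangle inequality
`|v|` is again in the kernel of `Lᵀ`, and strong connectivity makes it positive. With
`H = diag |v|` one has `xᵀ (HL + LᵀH) x = Σᵢⱼ |vᵢ| aᵢⱼ (xᵢ - xⱼ)²`, so `HL + LᵀH` is positive
semidefinite and its kernel lies in the kernel of `L`, hence of `LᵀL`. Minimising the quadratic
form of `HL + LᵀH` over the unit sphere of its range then yields `γ`.
-/

open Matrix

theorem exists_pos_mul_le_of_pos_on_submodule {E : Type*} [NormedAddCommGroup E]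
    [NormedSpace ℝ E] [FiniteDimensional ℝ E] (V : Submodule ℝ E) {f g : E → ℝ}
    (hf : Continuous f) (hg : Continuous g)
    (hf_smul : ∀ (t : ℝ) x, f (t • x) = t ^ 2 * f x)
    (hg_smul : ∀ (t : ℝ) x, g (t • x) = t ^ 2 * g x)
    (hpos : ∀ x ∈ V, x ≠ 0 → 0 < g x) :
    ∃ c > 0, ∀ x ∈ V, c * f x ≤ g x := by
  set K := Metric.sphere (0 : E) 1 ∩ V
  suffices ∃ c > 0, ∀ u ∈ K, c * f u ≤ g u by
    obtain ⟨c, hc, hcK⟩ := this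
    refine ⟨c, hc, fun x hx => ?_⟩
    rcases eq_or_ne x 0 with rfl | hx0
    · simp [show f 0 = 0 by simpa using hf_smul 0 0, show g 0 = 0 by simpa using hg_smul 0 0]
    have hu : ‖x‖⁻¹ • x ∈ K :=
      ⟨by simp [norm_smul, hx0], V.smul_mem _ hx⟩
    have hx_eq : x = ‖x‖ • ‖x‖⁻¹ • x := by simp [smul_smul, hx0]
    rw [hx_eq, hf_smul, hg_smul, mul_left_comm]
    exact mul_le_mul_of_nonneg_left (hcK _ hu) (sq_nonneg _)
  have hK : IsCompact K := (isCompact_sphere 0 1).inter_right V.closed_of_finiteDimensional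
  rcases K.eq_empty_or_nonempty with hK₀ | hK₀
  · exact ⟨1, one_pos, by simp [hK₀]⟩
  obtain ⟨z, hzK, hz⟩ := hK.exists_isMinOn hK₀ hg.continuousOn
  obtain ⟨C, hC⟩ := hK.exists_bound_of_continuousOn hf.continuousOn
  have hgz : 0 < g z := hpos z hzK.2 (ne_zero_of_mem_sphere (by norm_num) ⟨z, hzK.1⟩)
  refine ⟨g z / (|C| + 1), by positivity, fun u hu => ?_⟩
  have hfu : f u ≤ |C| + 1 := by
    linarith [le_abs_self (f u), le_abs_self C, (Real.norm_eq_abs _).symm.trans_le (hC u hu)]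
  calc g z / (|C| + 1) * f u ≤ g z / (|C| + 1) * (|C| + 1) := by gcongr
    _ = g z := by field_simp
    _ ≤ g u := hz hu

namespace Matrix

variable {n : Type*}

def IsStronglyConnected (A : Matrix n n ℝ) : Prop :=
  ∀ p q : n, Relation.ReflTransGen (fun j i => 0 < A i j) q p

theorem IsStronglyConnected.forall_of_closed {A : Matrix n n ℝ} (hA : A.IsStronglyConnected)
    {P : n → Prop} (hP : ∀ i j, 0 < A i j → P j → P i) {q : n} (hq : P q) (p : n) : P p := by
  induction hA p q with
  | refl => exact hq
  | tail _ hij ih => exact hP _ _ hij ih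

variable [Fintype n]

theorem dotProduct_add_transpose_mulVec {R : Type*} [CommRing R] (M : Matrix n n R)
    (x : n → R) : x ⬝ᵥ ((M + Mᵀ) *ᵥ x) = 2 * (x ⬝ᵥ (M *ᵥ x)) := by
  rw [add_mulVec, dotProduct_add, dotProduct_mulVec x Mᵀ, vecMul_transpose, dotProduct_comm]
  ring

theorem dotProduct_add_mulVec_add_of_mulVec_eq_zero {R : Type*} [CommRing R]
    {M : Matrix n n R} (hM : Mᵀ = M) {k : n → R} (hk : M *ᵥ k = 0) (x : n → R) :
    (x + k) ⬝ᵥ (M *ᵥ (x + k)) = x ⬝ᵥ (M *ᵥ x) := by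
  rw [mulVec_add, hk, add_zero, add_dotProduct, dotProduct_mulVec k, ← hM, vecMul_transpose,
    hM, hk, zero_dotProduct, add_zero]

theorem disjoint_range_ker_mulVecLin {M : Matrix n n ℝ} (hM : Mᵀ = M) :
    Disjoint (LinearMap.range M.mulVecLin) (LinearMap.ker M.mulVecLin) := by
  refine Submodule.disjoint_def.2 fun v ⟨y, hy⟩ hv => dotProduct_self_eq_zero.1 ?_
  rw [LinearMap.mem_ker, mulVecLin_apply] at hv
  nth_rewrite 1 [← hy]
  rw [mulVecLin_apply, ← vecMul_transpose, ← dotProduct_mulVec, hM, hv, dotProduct_zero]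

theorem PosSemidef.exists_pos_sub_smul_posSemidef {A B : Matrix n n ℝ} (hA : A.PosSemidef)
    (hB : B.IsSymm) (hker : ∀ x, A *ᵥ x = 0 → B *ᵥ x = 0) :
    ∃ c : ℝ, 0 < c ∧ (A - c • B).PosSemidef := by
  have hAT : Aᵀ = A := by simpa using hA.isHermitian.eq
  set V := LinearMap.range A.mulVecLin
  have hcompl : IsCompl V (LinearMap.ker A.mulVecLin) :=
    (Submodule.isCompl_iff_disjoint _ _ (LinearMap.finrank_range_add_finrank_ker _).ge).2
      (disjoint_range_ker_mulVecLin hAT)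
  have hpos : ∀ v ∈ V, v ≠ 0 → 0 < v ⬝ᵥ (A *ᵥ v) := by
    intro v hv hv0
    have hnonneg : 0 ≤ v ⬝ᵥ (A *ᵥ v) := by simpa using hA.dotProduct_mulVec_nonneg v
    refine hnonneg.lt_of_ne' fun h => ?_
    have hAv : A *ᵥ v = 0 := (hA.dotProduct_mulVec_zero_iff v).1 (by simpa using h)
    exact hv0 (Submodule.disjoint_def.1 hcompl.disjoint v hv hAv)
  obtain ⟨c, hc, hle⟩ := exists_pos_mul_le_of_pos_on_submodule V
    (f := fun x => x ⬝ᵥ (B *ᵥ x)) (g := fun x => x ⬝ᵥ (A *ᵥ x)) (by fun_prop) (by fun_prop)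
    (fun t x => by simp only [mulVec_smul, dotProduct_smul, smul_dotProduct, smul_eq_mul]; ring)
    (fun t x => by simp only [mulVec_smul, dotProduct_smul, smul_dotProduct, smul_eq_mul]; ring)
    hpos
  have hsymm : (A - c • B).IsHermitian :=
    hA.isHermitian.sub (isHermitian_iff_isSymm.2 (hB.smul c))
  refine ⟨c, hc, .of_dotProduct_mulVec_nonneg hsymm fun x => ?_⟩
  obtain ⟨v, hv, k, hk, rfl⟩ :=
    Submodule.mem_sup.1 (hcompl.sup_eq_top.symm ▸ Submodule.mem_top (x := x))
  have hBk : B *ᵥ k = 0 := hker k hk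
  rw [star_trivial, sub_mulVec, dotProduct_sub, smul_mulVec, dotProduct_smul, smul_eq_mul,
    dotProduct_add_mulVec_add_of_mulVec_eq_zero hAT hk,
    dotProduct_add_mulVec_add_of_mulVec_eq_zero hB.eq hBk, sub_nonneg]
  exact hle v hv

section Laplacian

variable {R : Type*} [CommRing R] [DecidableEq n] (A : Matrix n n R)

def laplacian : Matrix n n R := diagonal (fun i => ∑ j, A i j) - A

theorem laplacian_mulVec_apply (x : n → R) (i : n) :
    (laplacian A *ᵥ x) i = ∑ j, A i j * (x i - x j) := by
  rw [laplacian, sub_mulVec, Pi.sub_apply, mulVec_diagonal, Finset.sum_mul]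
  simp [mulVec, dotProduct, mul_sub]

theorem laplacian_mulVec_one : laplacian A *ᵥ 1 = 0 := by
  ext i
  simp [laplacian_mulVec_apply]

theorem vecMul_laplacian_apply (v : n → R) (j : n) :
    (v ᵥ* laplacian A) j = v j * ∑ k, A j k - (v ᵥ* A) j := by
  rw [laplacian, vecMul_sub, Pi.sub_apply, vecMul_diagonal]

theorem sum_vecMul_laplacian (v : n → R) : ∑ j, (v ᵥ* laplacian A) j = 0 := by
  simpa [dotProduct, laplacian_mulVec_one] using (dotProduct_mulVec v (laplacian A) 1).symm

theorem two_mul_dotProduct_diagonal_mul_laplacian_mulVec {w : n → R}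
    (hw : w ᵥ* laplacian A = 0) (x : n → R) :
    2 * (x ⬝ᵥ ((diagonal w * laplacian A) *ᵥ x)) = ∑ i, ∑ j, w i * A i j * (x i - x j) ^ 2 := by
  -- `0 = (w ᵥ* L) ⬝ᵥ x ^ 2 = w ⬝ᵥ (L *ᵥ x ^ 2)`: the weights `w` balance the flow of `x ^ 2`.
  have hbalance : ∑ i, ∑ j, w i * A i j * (x i ^ 2 - x j ^ 2) = 0 := by
    have := dotProduct_mulVec w (laplacian A) (x ^ 2)
    simpa [hw, dotProduct, laplacian_mulVec_apply, Finset.mul_sum, mul_assoc] using this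
  rw [← sub_eq_zero, ← hbalance]
  simp only [← mulVec_mulVec, mulVec_diagonal, dotProduct, laplacian_mulVec_apply, Finset.mul_sum,
    ← Finset.sum_sub_distrib]
  refine Finset.sum_congr rfl fun i _ => Finset.sum_congr rfl fun j _ => ?_
  ring

end Laplacian

section Real

variable [DecidableEq n] {A : Matrix n n ℝ}

theorem abs_vecMul_laplacian_eq_zero (hA : ∀ i j, 0 ≤ A i j) {v : n → ℝ}
    (hv : v ᵥ* laplacian A = 0) : |v| ᵥ* laplacian A = 0 := by
  have hle : ∀ j, (|v| ᵥ* laplacian A) j ≤ 0 := by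
    intro j
    have hvj := congrFun hv j
    rw [vecMul_laplacian_apply, Pi.zero_apply, sub_eq_zero] at hvj
    rw [vecMul_laplacian_apply, sub_nonpos]
    calc |v| j * ∑ k, A j k = |(v ᵥ* A) j| := by
          rw [← hvj, abs_mul, abs_of_nonneg (Finset.sum_nonneg fun k _ => hA j k), Pi.abs_apply]
      _ ≤ (|v| ᵥ* A) j := by
          simpa [vecMul, dotProduct, abs_mul, abs_of_nonneg (hA _ j)] using
            Finset.abs_sum_le_sum_abs (fun i => v i * A i j) Finset.univ
  funext j
  exact (Finset.sum_eq_zero_iff_of_nonpos fun i _ => hle i).1 (sum_vecMul_laplacian A |v|) j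
    (Finset.mem_univ j)

theorem pos_of_vecMul_laplacian_eq_zero (hA : ∀ i j, 0 ≤ A i j) (hsc : A.IsStronglyConnected)
    {w : n → ℝ} (hw : 0 ≤ w) (hw₀ : w ≠ 0) (hwL : w ᵥ* laplacian A = 0) (i : n) : 0 < w i := by
  refine (hw i).lt_of_ne' fun hi =>
    hw₀ (funext (hsc.forall_of_closed (P := fun k => w k = 0) ?_ hi))
  -- Column `j` of `w ᵥ* L = 0` reads `Σᵢ wᵢ Aᵢⱼ = wⱼ Σₖ Aⱼₖ`, so zeros of `w` spread along edges.
  intro k j hkj hj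
  have hcol := congrFun hwL j
  rw [vecMul_laplacian_apply, hj, zero_mul, zero_sub, Pi.zero_apply, neg_eq_zero] at hcol
  have hk := (Finset.sum_eq_zero_iff_of_nonneg fun i _ => mul_nonneg (hw i) (hA i j)).1 hcol k
    (Finset.mem_univ k)
  exact (mul_eq_zero.1 hk).resolve_right hkj.ne'

theorem exists_pos_vecMul_laplacian_eq_zero (hA : ∀ i j, 0 ≤ A i j)
    (hsc : A.IsStronglyConnected) : ∃ w : n → ℝ, (∀ i, 0 < w i) ∧ w ᵥ* laplacian A = 0 := by
  cases isEmpty_or_nonempty n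
  · exact ⟨0, isEmptyElim, Subsingleton.elim _ _⟩
  have hdet : (laplacian A).det = 0 :=
    exists_mulVec_eq_zero_iff.1 ⟨1, one_ne_zero, laplacian_mulVec_one A⟩
  obtain ⟨v, hv₀, hv⟩ := exists_vecMul_eq_zero_iff.2 hdet
  exact ⟨|v|, pos_of_vecMul_laplacian_eq_zero hA hsc (abs_nonneg v) (by simpa using hv₀)
    (abs_vecMul_laplacian_eq_zero hA hv), abs_vecMul_laplacian_eq_zero hA hv⟩

theorem posSemidef_diagonal_mul_laplacian_add_transpose (hA : ∀ i j, 0 ≤ A i j) {w : n → ℝ}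
    (hw : 0 ≤ w) (hwL : w ᵥ* laplacian A = 0) :
    (diagonal w * laplacian A + (diagonal w * laplacian A)ᵀ).PosSemidef := by
  have hsymm := isHermitian_iff_isSymm.2 (isSymm_add_transpose_self (diagonal w * laplacian A))
  refine .of_dotProduct_mulVec_nonneg hsymm fun x => ?_
  rw [star_trivial, dotProduct_add_transpose_mulVec,
    two_mul_dotProduct_diagonal_mul_laplacian_mulVec A hwL]
  exact Finset.sum_nonneg fun i _ => Finset.sum_nonneg fun j _ =>
    mul_nonneg (mul_nonneg (hw i) (hA i j)) (sq_nonneg _)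

theorem laplacian_mulVec_eq_zero_of_mulVec_eq_zero (hA : ∀ i j, 0 ≤ A i j) {w : n → ℝ}
    (hw : ∀ i, 0 < w i) (hwL : w ᵥ* laplacian A = 0) {x : n → ℝ}
    (hx : (diagonal w * laplacian A + (diagonal w * laplacian A)ᵀ) *ᵥ x = 0) :
    laplacian A *ᵥ x = 0 := by
  have hsum : ∑ p : n × n, w p.1 * A p.1 p.2 * (x p.1 - x p.2) ^ 2 = 0 := by
    rw [Fintype.sum_prod_type, ← two_mul_dotProduct_diagonal_mul_laplacian_mulVec A hwL,
      ← dotProduct_add_transpose_mulVec, hx, dotProduct_zero]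
  have hterm (i j : n) : w i * A i j * (x i - x j) ^ 2 = 0 :=
    congrFun ((Fintype.sum_eq_zero_iff_of_nonneg fun p =>
      mul_nonneg (mul_nonneg (hw p.1).le (hA p.1 p.2)) (sq_nonneg _)).1 hsum) (i, j)
  ext i
  rw [laplacian_mulVec_apply, Pi.zero_apply]
  refine Finset.sum_eq_zero fun j _ => ?_
  rcases mul_eq_zero.1 (hterm i j) with h | h
  · simp [(mul_eq_zero.1 h).resolve_left (hw i).ne']
  · simp [pow_eq_zero_iff two_ne_zero |>.1 h]

end Real

end Matrix

/-- **Appendix Lemma (Lyapunov certificate for strongly connected Laplacians).**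
Let `L` be the Laplacian matrix of a strongly connected weighted directed graph
(edge from `j` to `i` iff `a i j > 0`). Then there exist `α₁,…,α_N > 0` and
`γ > 0` such that, with `H = diag(α)`, `HL + LᵀH ≥ 3γ LᵀL` in the Loewner
order. -/
theorem strongly_connected_laplacian_lyapunov
    {N : ℕ} (a : Fin N → Fin N → ℝ)
    (ha : ∀ i j, 0 ≤ a i j) (haii : ∀ i, a i i = 0)
    (L : Matrix (Fin N) (Fin N) ℝ)
    (hL : ∀ i j, L i j = if i = j then ∑ k, a i k else -(a i j))
    (hsc : ∀ p q : Fin N, Relation.ReflTransGen (fun j i => 0 < a i j) q p) :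
    ∃ (α : Fin N → ℝ) (γ : ℝ), (∀ i, 0 < α i) ∧ 0 < γ ∧
      (Matrix.diagonal α * L + Lᵀ * Matrix.diagonal α
        - (3 * γ) • (Lᵀ * L)).PosSemidef := by
  have hA : ∀ i j, 0 ≤ of a i j := ha
  have hL_eq : L = laplacian (of a) := by
    ext i j
    rw [hL]
    by_cases hij : i = j
    · subst hij; simp [laplacian, haii]
    · simp [laplacian, hij]
  subst hL_eq
  obtain ⟨w, hw, hwL⟩ := exists_pos_vecMul_laplacian_eq_zero hA hsc
  have hQ := posSemidef_diagonal_mul_laplacian_add_transpose hA (fun i => (hw i).le) hwL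
  obtain ⟨c, hc, hle⟩ := hQ.exists_pos_sub_smul_posSemidef (isSymm_transpose_mul_self _)
    fun x hx => by
      rw [← mulVec_mulVec, laplacian_mulVec_eq_zero_of_mulVec_eq_zero hA hw hwL hx, mulVec_zero]
  rw [transpose_mul, diagonal_transpose] at hle
  exact ⟨w, c / 3, hw, by positivity, by rwa [mul_div_cancel₀ _ three_ne_zero]⟩
end

section
/- Let L ∈ ℝ^{N×N} be the Laplacian matrix of a strongly connected weighted directed graph, and let α ∈ ℝ^N have all entries positive and satisfy αᵀL = 0. With H = diag(α_1,…,α_N), the symmetric matrix HL + LᵀH is positive semidefinite and its kernel is exactly the span of the all-ones vector 𝟙 (equivalently, HL + LᵀH has rank N − 1). -/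
/-!
Zero row sums of `L` and `αᵀL = 0` give, with `H = diagonal α`,
`vᵀ(HL + LᵀH)v = -∑ᵢ ∑ⱼ αᵢ Lᵢⱼ (vᵢ - vⱼ)²`, a sum of nonnegative terms since the diagonal
terms vanish and `Lᵢⱼ = -aᵢⱼ ≤ 0` off the diagonal. Hence the matrix is positive semidefinite,
and a vector in its kernel has `vᵢ = vⱼ` along every edge, so it is constant by strong
connectivity. Conversely constant vectors are in the kernel because `L𝟙 = 0` and `Lᵀα = 0`.
-/

open Matrix Finset

section SymmetrizedForm

variable {ι : Type*} {L : Matrix ι ι ℝ} {α : ι → ℝ}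

theorem neg_mul_mul_sq_sub_nonneg (hα : ∀ i, 0 ≤ α i) (hoff : ∀ i j, i ≠ j → L i j ≤ 0)
    (v : ι → ℝ) (i j : ι) : 0 ≤ -(α i * L i j * (v i - v j) ^ 2) := by
  obtain rfl | hij := eq_or_ne i j
  · simp
  · exact neg_nonneg.2 <| mul_nonpos_of_nonpos_of_nonneg
      (mul_nonpos_of_nonneg_of_nonpos (hα i) (hoff i j hij)) (sq_nonneg _)

variable [Fintype ι] [DecidableEq ι]

theorem dotProduct_diagonal_mul_add_transpose_mul_mulVec (hrow : L *ᵥ 1 = 0)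
    (hcol : α ᵥ* L = 0) (v : ι → ℝ) :
    v ⬝ᵥ ((diagonal α * L + Lᵀ * diagonal α) *ᵥ v) =
      -∑ i, ∑ j, α i * L i j * (v i - v j) ^ 2 := by
  have hrow' : ∀ i, ∑ j, L i j = 0 := fun i => by
    simpa [mulVec, dotProduct] using congrFun hrow i
  have hcol' : ∀ j, ∑ i, α i * L i j = 0 := fun j => by
    simpa [vecMul, dotProduct] using congrFun hcol j
  have hsq_left : ∑ i, ∑ j, α i * L i j * v i ^ 2 = 0 := by
    simp [← sum_mul, ← mul_sum, hrow']
  have hsq_right : ∑ i, ∑ j, α i * L i j * v j ^ 2 = 0 := by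
    rw [sum_comm]
    simp [← sum_mul, hcol']
  calc v ⬝ᵥ ((diagonal α * L + Lᵀ * diagonal α) *ᵥ v)
      = ∑ i, ∑ j, 2 * (α i * L i j * v i * v j) := by
        simp only [dotProduct, mulVec, Matrix.add_apply, diagonal_mul, mul_diagonal,
          transpose_apply, add_mul, mul_add, mul_sum, sum_add_distrib]
        rw [sum_comm (f := fun i j => v i * (L j i * α j * v j)), ← sum_add_distrib]
        refine sum_congr rfl fun i _ => ?_
        rw [← sum_add_distrib]
        exact sum_congr rfl fun j _ => by ring
    _ = ∑ i, ∑ j, (α i * L i j * v i ^ 2 + α i * L i j * v j ^ 2 -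
          α i * L i j * (v i - v j) ^ 2) := by
        congr! 2 with i - j -
        ring
    _ = -∑ i, ∑ j, α i * L i j * (v i - v j) ^ 2 := by
        simp only [sum_sub_distrib, sum_add_distrib, hsq_left, hsq_right]
        ring

theorem isHermitian_diagonal_mul_add_transpose_mul (α : ι → ℝ) (L : Matrix ι ι ℝ) :
    (diagonal α * L + Lᵀ * diagonal α).IsHermitian := by
  simp [IsHermitian, transpose_add, transpose_mul, add_comm]

theorem posSemidef_diagonal_mul_add_transpose_mul (hα : ∀ i, 0 ≤ α i) (hrow : L *ᵥ 1 = 0)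
    (hcol : α ᵥ* L = 0) (hoff : ∀ i j, i ≠ j → L i j ≤ 0) :
    (diagonal α * L + Lᵀ * diagonal α).PosSemidef := by
  refine .of_dotProduct_mulVec_nonneg (isHermitian_diagonal_mul_add_transpose_mul α L) fun v => ?_
  rw [star_trivial, dotProduct_diagonal_mul_add_transpose_mul_mulVec hrow hcol, ← sum_neg_distrib]
  exact sum_nonneg fun i _ => by
    rw [← sum_neg_distrib]
    exact sum_nonneg fun j _ => neg_mul_mul_sq_sub_nonneg hα hoff v i j

theorem eq_of_diagonal_mul_add_transpose_mul_mulVec_eq_zero (hα : ∀ i, 0 < α i)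
    (hrow : L *ᵥ 1 = 0) (hcol : α ᵥ* L = 0) (hoff : ∀ i j, i ≠ j → L i j ≤ 0) {v : ι → ℝ}
    (hv : (diagonal α * L + Lᵀ * diagonal α) *ᵥ v = 0) {i j : ι} (hij : L i j < 0) :
    v i = v j := by
  have hterm_nonneg := neg_mul_mul_sq_sub_nonneg (fun k => (hα k).le) hoff v
  have hsum : ∑ i, ∑ j, -(α i * L i j * (v i - v j) ^ 2) = 0 := by
    simp only [sum_neg_distrib]
    rw [← dotProduct_diagonal_mul_add_transpose_mul_mulVec hrow hcol, hv, dotProduct_zero]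
  have hterm : -(α i * L i j * (v i - v j) ^ 2) = 0 :=
    (sum_eq_zero_iff_of_nonneg fun j _ => hterm_nonneg i j).1
      ((sum_eq_zero_iff_of_nonneg fun i _ => sum_nonneg fun j _ => hterm_nonneg i j).1 hsum i
        (mem_univ i)) j (mem_univ j)
  have hcoef : α i * L i j ≠ 0 := mul_ne_zero (hα i).ne' hij.ne
  simpa [hcoef, sub_eq_zero] using hterm

theorem diagonal_mul_add_transpose_mul_mulVec_const (hrow : L *ᵥ 1 = 0) (hcol : α ᵥ* L = 0)
    (c : ℝ) : (diagonal α * L + Lᵀ * diagonal α) *ᵥ (fun _ => c) = 0 := by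
  have hconst : (fun _ : ι => c) = c • 1 := by ext; simp
  have hdiag : diagonal α *ᵥ 1 = α := by ext; simp [mulVec_diagonal]
  rw [hconst, mulVec_smul, add_mulVec, ← mulVec_mulVec, ← mulVec_mulVec, hrow, hdiag,
    mulVec_transpose, hcol]
  simp

theorem diagonal_mul_add_transpose_mul_mulVec_eq_zero_iff (hα : ∀ i, 0 < α i)
    (hrow : L *ᵥ 1 = 0) (hcol : α ᵥ* L = 0) (hoff : ∀ i j, i ≠ j → L i j ≤ 0)
    (hconn : ∀ p q, Relation.ReflTransGen (fun j i => L i j < 0) q p) (v : ι → ℝ) :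
    (diagonal α * L + Lᵀ * diagonal α) *ᵥ v = 0 ↔ ∃ c, ∀ i, v i = c := by
  constructor
  · intro hv
    rcases isEmpty_or_nonempty ι with hι | ⟨⟨q⟩⟩
    · exact ⟨0, isEmptyElim⟩
    · refine ⟨v q, fun p => ?_⟩
      have hpath := (hconn p q).lift v fun j i hji =>
        (eq_of_diagonal_mul_add_transpose_mul_mulVec_eq_zero hα hrow hcol hoff hv hji).symm
      rw [Relation.reflTransGen_eq_self] at hpath
      exact hpath.symm
  · rintro ⟨c, hc⟩
    rw [funext hc]
    exact diagonal_mul_add_transpose_mul_mulVec_const hrow hcol c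

theorem laplacian_mulVec_one {a : ι → ι → ℝ} (haii : ∀ i, a i i = 0)
    (hL : ∀ i j, L i j = if i = j then ∑ k, a i k else -(a i j)) : L *ᵥ 1 = 0 := by
  have hL' : ∀ i j, L i j = (if i = j then ∑ k, a i k else 0) - a i j := by
    intro i j
    rw [hL]
    split_ifs with h <;> simp [h, haii]
  ext i
  simp [mulVec, dotProduct, hL', sum_sub_distrib]

end SymmetrizedForm

/-- Let `L` be the Laplacian of a strongly connected weighted directed graph and
`α` a positive left null vector of `L`. With `H = diag(α)`, the symmetric
matrix `HL + LᵀH` is positive semidefinite and its kernel is exactly the span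
of the all-ones vector. -/
theorem laplacian_symmetrized_psd_kernel
    {N : ℕ} (a : Fin N → Fin N → ℝ)
    (ha : ∀ i j, 0 ≤ a i j) (haii : ∀ i, a i i = 0)
    (L : Matrix (Fin N) (Fin N) ℝ)
    (hL : ∀ i j, L i j = if i = j then ∑ k, a i k else -(a i j))
    (hsc : ∀ p q : Fin N, Relation.ReflTransGen (fun j i => 0 < a i j) q p)
    (α : Fin N → ℝ) (hα : ∀ i, 0 < α i)
    (hαL : α ᵥ* L = 0) :
    (Matrix.diagonal α * L + Lᵀ * Matrix.diagonal α).PosSemidef ∧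
      ∀ v : Fin N → ℝ,
        (Matrix.diagonal α * L + Lᵀ * Matrix.diagonal α) *ᵥ v = 0 ↔
          ∃ c : ℝ, ∀ i, v i = c := by
  have hrow : L *ᵥ 1 = 0 := laplacian_mulVec_one haii hL
  have hL_offdiag : ∀ i j, i ≠ j → L i j = -a i j := fun i j hij => by rw [hL, if_neg hij]
  have hedge : ∀ j i, 0 < a i j → L i j < 0 := fun j i hji => by
    have hij : i ≠ j := by
      rintro rfl
      exact hji.ne' (haii i)
    rwa [hL_offdiag i j hij, neg_lt_zero]
  have hconn : ∀ p q, Relation.ReflTransGen (fun j i => L i j < 0) q p := fun p q =>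
    Relation.ReflTransGen.mono hedge q p (hsc p q)
  have hoff_nonpos : ∀ i j, i ≠ j → L i j ≤ 0 := fun i j hij =>
    (hL_offdiag i j hij).trans_le (neg_nonpos.2 (ha i j))
  exact ⟨posSemidef_diagonal_mul_add_transpose_mul (fun i => (hα i).le) hrow hαL hoff_nonpos,
    diagonal_mul_add_transpose_mul_mulVec_eq_zero_iff hα hrow hαL hoff_nonpos hconn⟩
end

section
/- Fix positive reals α_1,…,α_N. For positive reals ρ_1,…,ρ_N define Q_ρ = R⁻¹(HR − μ hhᵀ)R⁻¹, where R = diag(ρ_1,…,ρ_N), H = diag(α_1,…,α_N), h = (α_1,…,α_N)ᵀ, and μ = (Σ_{i=1}^N α_i/ρ_i)⁻¹. Then the quadratic form z ↦ zᵀQ_ρ z is nonincreasing in each ρ_i: if 0 < ρ_i ≤ ρ'_i for all i, then zᵀQ_{ρ'} z ≤ zᵀQ_ρ z for every z ∈ ℝ^N, i.e., Q_ρ − Q_{ρ'} is positive semidefinite. (Appendix Lemma on monotonicity of the Lyapunov function in ρ.) -/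
/-!
With weights `wᵢ = αᵢ / ρᵢ`, the matrix `Q_ρ` is `diag(w) − (∑ wᵢ)⁻¹ w wᵀ`, whose quadratic form
`∑ wᵢ zᵢ² − (∑ wᵢ)⁻¹ (∑ wᵢ zᵢ)²` is the minimum over `c` of `∑ wᵢ (zᵢ − c)²`, attained at the
weighted mean. Increasing `ρ` decreases every weight, hence every `∑ wᵢ (zᵢ − c)²`, hence the minimum.
-/

open Matrix

/-- `Q_ρ = R⁻¹ (H R − μ h hᵀ) R⁻¹` with `R = diag(ρ)`, `H = diag(α)`,
`h = α` and `μ = (∑ i, α i / ρ i)⁻¹`. -/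
noncomputable def Qrho {N : ℕ} (α ρ : Fin N → ℝ) : Matrix (Fin N) (Fin N) ℝ :=
  Matrix.diagonal (fun i => (ρ i)⁻¹) *
    (Matrix.diagonal α * Matrix.diagonal ρ
      - (∑ i, α i / ρ i)⁻¹ • Matrix.vecMulVec α α) *
    Matrix.diagonal (fun i => (ρ i)⁻¹)

namespace Matrix

variable {ι : Type*} [Fintype ι] [DecidableEq ι]

/-- Its quadratic form is `∑ wᵢ` times the `w`-weighted variance. -/
noncomputable def varianceForm (w : ι → ℝ) : Matrix ι ι ℝ :=
  diagonal w - (∑ i, w i)⁻¹ • vecMulVec w w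

lemma varianceForm_isHermitian (w : ι → ℝ) : (varianceForm w).IsHermitian :=
  (isHermitian_diagonal w).sub <|
    .smul (by simpa using (posSemidef_vecMulVec_self_star w).isHermitian) (.all _)

lemma dotProduct_varianceForm_mulVec (w x : ι → ℝ) :
    x ⬝ᵥ (varianceForm w *ᵥ x)
      = ∑ i, w i * x i ^ 2 - (∑ i, w i)⁻¹ * (∑ i, w i * x i) ^ 2 := by
  rw [varianceForm, sub_mulVec, dotProduct_sub, smul_mulVec, dotProduct_smul,
    dotProduct_mulVec x (vecMulVec w w), vecMul_vecMulVec, smul_dotProduct, dotProduct_comm x w]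
  simp only [dotProduct, mulVec_diagonal, smul_eq_mul, sq]
  simp only [mul_left_comm (x _)]

lemma sum_mul_sub_sq_eq_dotProduct_varianceForm_mulVec_add (w x : ι → ℝ)
    (hw : ∑ i, w i ≠ 0) (c : ℝ) :
    ∑ i, w i * (x i - c) ^ 2 = x ⬝ᵥ (varianceForm w *ᵥ x)
      + (∑ i, w i)⁻¹ * (∑ i, w i * x i - c * ∑ i, w i) ^ 2 := by
  have hexpand : ∑ i, w i * (x i - c) ^ 2
      = ∑ i, w i * x i ^ 2 - 2 * c * ∑ i, w i * x i + c ^ 2 * ∑ i, w i := by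
    simp only [Finset.mul_sum, ← Finset.sum_sub_distrib, ← Finset.sum_add_distrib]
    exact Finset.sum_congr rfl fun i _ => by ring
  rw [hexpand, dotProduct_varianceForm_mulVec]
  field_simp
  ring

lemma dotProduct_varianceForm_mulVec_le_sum_mul_sub_sq {w : ι → ℝ} (hw : 0 < ∑ i, w i)
    (x : ι → ℝ) (c : ℝ) :
    x ⬝ᵥ (varianceForm w *ᵥ x) ≤ ∑ i, w i * (x i - c) ^ 2 := by
  rw [sum_mul_sub_sq_eq_dotProduct_varianceForm_mulVec_add w x hw.ne']
  have : 0 ≤ (∑ i, w i)⁻¹ * (∑ i, w i * x i - c * ∑ i, w i) ^ 2 := by positivity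
  linarith

lemma dotProduct_varianceForm_mulVec_eq_sum_mul_sub_mean_sq {w : ι → ℝ} (hw : ∑ i, w i ≠ 0)
    (x : ι → ℝ) :
    x ⬝ᵥ (varianceForm w *ᵥ x) = ∑ i, w i * (x i - (∑ j, w j)⁻¹ * ∑ j, w j * x j) ^ 2 := by
  rw [sum_mul_sub_sq_eq_dotProduct_varianceForm_mulVec_add w x hw, mul_comm _ (∑ i, w i),
    mul_inv_cancel_left₀ hw, sub_self, zero_pow two_ne_zero, mul_zero, add_zero]

lemma dotProduct_varianceForm_mulVec_mono {w w' : ι → ℝ} (hpos : 0 < ∑ i, w' i)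
    (hle : ∀ i, w' i ≤ w i) (x : ι → ℝ) :
    x ⬝ᵥ (varianceForm w' *ᵥ x) ≤ x ⬝ᵥ (varianceForm w *ᵥ x) := by
  have hw : ∑ i, w i ≠ 0 := (hpos.trans_le (Finset.sum_le_sum fun i _ => hle i)).ne'
  set mean := (∑ j, w j)⁻¹ * ∑ j, w j * x j
  calc x ⬝ᵥ (varianceForm w' *ᵥ x)
      ≤ ∑ i, w' i * (x i - mean) ^ 2 :=
        dotProduct_varianceForm_mulVec_le_sum_mul_sub_sq hpos x mean
    _ ≤ ∑ i, w i * (x i - mean) ^ 2 :=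
      Finset.sum_le_sum fun i _ => mul_le_mul_of_nonneg_right (hle i) (sq_nonneg _)
    _ = x ⬝ᵥ (varianceForm w *ᵥ x) :=
      (dotProduct_varianceForm_mulVec_eq_sum_mul_sub_mean_sq hw x).symm

lemma posSemidef_varianceForm_sub {w w' : ι → ℝ} (hpos : 0 < ∑ i, w' i)
    (hle : ∀ i, w' i ≤ w i) : (varianceForm w - varianceForm w').PosSemidef := by
  refine posSemidef_iff_dotProduct_mulVec.2
    ⟨(varianceForm_isHermitian w).sub (varianceForm_isHermitian w'), fun x => ?_⟩
  rw [star_trivial, sub_mulVec, dotProduct_sub, sub_nonneg]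
  exact dotProduct_varianceForm_mulVec_mono hpos hle x

end Matrix

/-- Where `ρᵢ = 0`, both sides have vanishing `i`-th row and column, since `0⁻¹ = 0`. -/
lemma Qrho_eq_varianceForm {N : ℕ} (α ρ : Fin N → ℝ) :
    Qrho α ρ = varianceForm (fun i => α i / ρ i) := by
  ext i j
  rcases eq_or_ne i j with rfl | h <;>
    simp [Qrho, varianceForm, diagonal_mul, mul_diagonal, vecMulVec_apply, *] <;> field_simp

/-- **Appendix Lemma (monotonicity of the Lyapunov function in ρ).** For fixed
positive `α₁,…,α_N`, the quadratic form `z ↦ zᵀ Q_ρ z` is nonincreasing in each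
`ρᵢ`: if `0 < ρᵢ ≤ ρ'ᵢ` for all `i`, then `Q_ρ − Q_{ρ'}` is positive
semidefinite. -/
theorem Qrho_monotone
    {N : ℕ} (α : Fin N → ℝ) (hα : ∀ i, 0 < α i)
    (ρ ρ' : Fin N → ℝ) (hρ : ∀ i, 0 < ρ i) (hle : ∀ i, ρ i ≤ ρ' i) :
    (Qrho α ρ - Qrho α ρ').PosSemidef := by
  rcases isEmpty_or_nonempty (Fin N) with hN | hN
  · exact Subsingleton.elim 0 (Qrho α ρ - Qrho α ρ') ▸ PosSemidef.zero
  have hρ' i : 0 < ρ' i := (hρ i).trans_le (hle i)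
  rw [Qrho_eq_varianceForm, Qrho_eq_varianceForm]
  exact posSemidef_varianceForm_sub
    (Finset.sum_pos (fun i _ => div_pos (hα i) (hρ' i)) Finset.univ_nonempty)
    fun i => div_le_div_of_nonneg_left (hα i).le (hρ i) (hle i)
end

section
/- Let V : [0,∞) → ℝ be differentiable with V(t) ≥ 0 for all t ≥ 0, let η > 0, and let g : [0,∞) → ℝ be nonnegative and integrable on [0,∞) (∫₀^∞ g(t) dt < ∞). If V'(t) ≤ −ηV(t) + g(t) for all t ≥ 0, then V(t) → 0 as t → ∞. (Comparison lemma used to conclude ζ_i → 0 from L² signals in the proof of Lemma 3.) -/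
/-!
Multiplying by the integrating factor `exp (η t)` gives
`(exp (η t) V t)' ≤ exp (η t) |g t|`, hence `V t ≤ exp (-η (t - a)) V a + ∫_{(a,∞)} |g|`
for `0 ≤ a ≤ t`. With `a = 0` this bounds `V`; with `a = t / 2` both terms then tend to `0`,
the second being a tail of an integrable function.
-/

open Filter Set MeasureTheory Real Topology

theorem le_exp_neg_mul_add_integral_of_deriv_le {V g : ℝ → ℝ} {η a b : ℝ} (hη : 0 ≤ η)
    (hab : a ≤ b) (hVc : ContinuousOn V (Icc a b))
    (hVd : ∀ t ∈ Ioo a b, DifferentiableAt ℝ V t) (hg : IntegrableOn g (Icc a b))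
    (hg0 : ∀ t ∈ Ioo a b, 0 ≤ g t)
    (hineq : ∀ t ∈ Ioo a b, deriv V t ≤ -η * V t + g t) :
    V b ≤ exp (-η * (b - a)) * V a + ∫ t in a..b, g t := by
  have hW : ∀ t ∈ Ioo a b, HasDerivAt (fun s => exp (η * s) * V s)
      (exp (η * t) * (η * V t + deriv V t)) t := by
    intro t ht
    have hexp : HasDerivAt (fun s => exp (η * s)) (exp (η * t) * η) t := by
      simpa using ((hasDerivAt_id t).const_mul η).exp
    exact (hexp.fun_mul (hVd t ht).hasDerivAt).congr_deriv (by ring)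
  have hW_le : ∀ t ∈ Ioo a b, exp (η * t) * (η * V t + deriv V t) ≤ exp (η * b) * g t := by
    intro t ht
    calc exp (η * t) * (η * V t + deriv V t) ≤ exp (η * t) * g t := by
          gcongr; linarith [hineq t ht]
      _ ≤ exp (η * b) * g t := by
          gcongr
          · exact hg0 t ht
          · exact ht.2.le
  have hFTC := intervalIntegral.sub_le_integral_of_hasDeriv_right_of_le hab
    (ContinuousOn.mul (by fun_prop) hVc) (fun t ht => (hW t ht).hasDerivWithinAt)
    (hg.const_mul _) hW_le
  simp only [Pi.mul_apply, intervalIntegral.integral_const_mul] at hFTC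
  have hexp : exp (-η * (b - a)) * exp (η * b) = exp (η * a) := by
    rw [← exp_add]; ring_nf
  refine le_of_mul_le_mul_left ?_ (exp_pos (η * b))
  calc exp (η * b) * V b ≤ exp (η * a) * V a + exp (η * b) * ∫ t in a..b, g t := by
        linarith
    _ = exp (η * b) * (exp (-η * (b - a)) * V a + ∫ t in a..b, g t) := by
      rw [← hexp]; ring

theorem intervalIntegral_le_integral_Ioi {f : ℝ → ℝ} {a b : ℝ} (hab : a ≤ b)
    (hf : IntegrableOn f (Ioi a)) (hf0 : ∀ x ∈ Ioi a, 0 ≤ f x) :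
    ∫ x in a..b, f x ≤ ∫ x in Ioi a, f x := by
  rw [← intervalIntegral.integral_Ioi_sub_Ioi hf hab, sub_le_self_iff]
  exact setIntegral_nonneg measurableSet_Ioi fun x hx => hf0 x ((Ioi_subset_Ioi hab) hx)

theorem le_exp_neg_mul_add_integral_Ioi_abs_of_deriv_le {V g : ℝ → ℝ} {η c : ℝ}
    (hη : 0 ≤ η) (hV : ∀ t ∈ Ici c, DifferentiableAt ℝ V t) (hg : IntegrableOn g (Ici c))
    (hineq : ∀ t ∈ Ici c, deriv V t ≤ -η * V t + g t) {a t : ℝ} (hca : c ≤ a)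
    (hat : a ≤ t) :
    V t ≤ exp (-η * (t - a)) * V a + ∫ s in Ioi a, |g s| := by
  have hsub : Icc a t ⊆ Ici c := fun s hs => hca.trans hs.1
  calc V t ≤ exp (-η * (t - a)) * V a + ∫ s in a..t, |g s| :=
        le_exp_neg_mul_add_integral_of_deriv_le hη hat
          (fun s hs => (hV s (hsub hs)).continuousAt.continuousWithinAt)
          (fun s hs => hV s (hsub (Ioo_subset_Icc_self hs)))
          (hg.mono_set hsub).abs (fun s _ => abs_nonneg _)
          (fun s hs => (hineq s (hsub (Ioo_subset_Icc_self hs))).trans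
            (by gcongr; exact le_abs_self _))
    _ ≤ _ := by
        gcongr
        exact intervalIntegral_le_integral_Ioi hat (hg.mono_set (Ioi_subset_Ici hca)).abs
          fun s _ => abs_nonneg _

theorem tendsto_setIntegral_Ioi_atTop_zero {E : Type*} [NormedAddCommGroup E]
    [NormedSpace ℝ E] {μ : Measure ℝ} {f : ℝ → E} {c : ℝ}
    (hf : IntegrableOn f (Ioi c) μ) :
    Tendsto (fun a => ∫ x in Ioi a, f x ∂μ) atTop (𝓝 0) := by
  have h := tendsto_setIntegral_of_antitone (fun a => measurableSet_Ioi)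
    (fun _ _ hab => Ioi_subset_Ioi hab) ⟨c, hf⟩
  have hempty : ⋂ a : ℝ, Ioi a = ∅ := iInter_eq_empty_iff.2 fun x => ⟨x, lt_irrefl x⟩
  rwa [hempty, Measure.restrict_empty, integral_zero_measure] at h

theorem comparison_lemma_tendsto_zero_general
    (V g : ℝ → ℝ) (η : ℝ) (hη : 0 < η)
    (hVpos : ∀ t, 0 ≤ t → 0 ≤ V t)
    (hVdiff : ∀ t, 0 ≤ t → DifferentiableAt ℝ V t)
    (hgint : MeasureTheory.IntegrableOn g (Set.Ici 0))
    (hineq : ∀ t, 0 ≤ t → deriv V t ≤ -η * V t + g t) :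
    Tendsto V atTop (nhds 0) := by
  have hest {a t : ℝ} (ha : 0 ≤ a) (hat : a ≤ t) :=
    le_exp_neg_mul_add_integral_Ioi_abs_of_deriv_le hη.le hVdiff hgint hineq ha hat
  set B := V 0 + ∫ s in Ioi 0, |g s|
  have hbdd : ∀ t, 0 ≤ t → V t ≤ B := by
    intro t ht
    have hdecay : exp (-η * (t - 0)) ≤ 1 := exp_le_one_iff.2 (by nlinarith)
    nlinarith [hest le_rfl ht, hVpos 0 le_rfl]
  have hupper : Tendsto (fun t => exp (-η * (t / 2)) * B + ∫ s in Ioi (t / 2), |g s|)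
      atTop (𝓝 0) := by
    have hhalf := tendsto_id.atTop_div_const (r := (2 : ℝ)) two_pos
    have hexp := tendsto_exp_atBot.comp (hhalf.const_mul_atTop_of_neg (neg_lt_zero.2 hη))
    have htail := (tendsto_setIntegral_Ioi_atTop_zero
      (hgint.mono_set Ioi_subset_Ici_self).abs).comp hhalf
    simpa using (hexp.mul_const B).add htail
  refine tendsto_of_tendsto_of_tendsto_of_le_of_le' tendsto_const_nhds hupper ?_ ?_
  · filter_upwards [eventually_ge_atTop 0] with t ht using hVpos t ht
  · filter_upwards [eventually_ge_atTop 0] with t ht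
    calc V t ≤ exp (-η * (t - t / 2)) * V (t / 2) + ∫ s in Ioi (t / 2), |g s| :=
          hest (by linarith) (by linarith)
      _ ≤ _ := by
          rw [show t - t / 2 = t / 2 by ring]
          gcongr
          exact hbdd _ (by linarith)

/-- **Comparison lemma** (used to conclude `ζᵢ → 0` from `L²` signals in the
proof of Lemma 3). If `V : [0,∞) → ℝ` is differentiable and nonnegative,
`η > 0`, `g` is nonnegative and Lebesgue integrable on `[0,∞)`, and
`V'(t) ≤ -η V(t) + g(t)` for all `t ≥ 0`, then `V(t) → 0` as `t → ∞`. -/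
theorem comparison_lemma_tendsto_zero
    (V g : ℝ → ℝ) (η : ℝ) (hη : 0 < η)
    (hVpos : ∀ t, 0 ≤ t → 0 ≤ V t)
    (hVdiff : ∀ t, 0 ≤ t → DifferentiableAt ℝ V t)
    (hgpos : ∀ t, 0 ≤ t → 0 ≤ g t)
    (hgint : MeasureTheory.IntegrableOn g (Set.Ici 0))
    (hineq : ∀ t, 0 ≤ t → deriv V t ≤ -η * V t + g t) :
    Tendsto V atTop (nhds 0) :=
  comparison_lemma_tendsto_zero_general V g η hη hVpos hVdiff hgint hineq
end
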